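/- arXiv:2306.02056 — 5 statements merged into one kernel-verified Lean document; each statement's English description precedes it below -/
import Mathlib

section
/- Let X be a δ-hyperbolic locally finite graph and let (x_n) and (y_n) be two geodesic rays converging to the same boundary point η. Then there exist T_0, T_1 ∈ ℕ with T_0, T_1 ≤ 2(d(x_0,y_0) + 3δ + 2) such that d(x_{T_0+n}, y_{T_1+n}) ≤ 5δ for every n ∈ ℕ. -/
namespace BA

open SimpleGraph

variable {V : Type*}

/-- A geodesic ray in a graph: consecutive vertices are adjacent and the graph
distance between the `m`-th and `n`-th vertices is `|m - n|`. -/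
def GeoRay (G : SimpleGraph V) (x : ℕ → V) : Prop :=
  (∀ n, G.Adj (x n) (x (n + 1))) ∧ ∀ m n, G.dist (x m) (x n) = Nat.dist m n

/-- A finite geodesic path of length `k`, recorded as a function `ℕ → V`
(only the values at indices `≤ k` are relevant). -/
def GeoSeg (G : SimpleGraph V) (p : ℕ → V) (k : ℕ) : Prop :=
  (∀ i < k, G.Adj (p i) (p (i + 1))) ∧
    ∀ i ≤ k, ∀ j ≤ k, G.dist (p i) (p j) = Nat.dist i j

/-- Two sequences of vertices are asymptotic iff their Hausdorff distance is
finite (expressed via walks, so it is meaningful in disconnected graphs). -/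
def Asymp (G : SimpleGraph V) (x y : ℕ → V) : Prop :=
  ∃ K : ℕ, (∀ n, ∃ m, ∃ w : G.Walk (x n) (y m), w.length ≤ K) ∧
    ∀ m, ∃ n, ∃ w : G.Walk (x n) (y m), w.length ≤ K

theorem asymp_refl (G : SimpleGraph V) (x : ℕ → V) : Asymp G x x :=
  ⟨0, fun n => ⟨n, Walk.nil, by simp⟩, fun n => ⟨n, Walk.nil, by simp⟩⟩

theorem asymp_symm {G : SimpleGraph V} {x y : ℕ → V} (h : Asymp G x y) : Asymp G y x := by
  obtain ⟨K, h1, h2⟩ := h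
  refine ⟨K, fun n => ?_, fun m => ?_⟩
  · obtain ⟨m, w, hw⟩ := h2 n
    exact ⟨m, w.reverse, by simpa using hw⟩
  · obtain ⟨n, w, hw⟩ := h1 m
    exact ⟨n, w.reverse, by simpa using hw⟩

theorem asymp_trans {G : SimpleGraph V} {x y z : ℕ → V} (h : Asymp G x y)
    (h' : Asymp G y z) : Asymp G x z := by
  obtain ⟨K1, h1, h2⟩ := h
  obtain ⟨K2, h3, h4⟩ := h'
  refine ⟨K1 + K2, fun n => ?_, fun p => ?_⟩
  · obtain ⟨m, w1, hw1⟩ := h1 n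
    obtain ⟨p, w2, hw2⟩ := h3 m
    exact ⟨p, w1.append w2, by rw [Walk.length_append]; omega⟩
  · obtain ⟨m, w2, hw2⟩ := h4 p
    obtain ⟨n, w1, hw1⟩ := h2 m
    exact ⟨n, w1.append w2, by rw [Walk.length_append]; omega⟩

/-- The setoid of geodesic rays up to asymptoticity; its quotient is the
(Gromov) boundary of the graph. -/
def asympSetoid (G : SimpleGraph V) : Setoid {x : ℕ → V // GeoRay G x} where
  r a b := Asymp G a.1 b.1
  iseqv := ⟨fun a => asymp_refl G a.1, fun h => asymp_symm h, fun h h' => asymp_trans h h'⟩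

/-- `δ`-hyperbolicity: every geodesic triangle is `δ`-thin, i.e. each side is
contained in the `δ`-neighbourhood of the union of the other two sides. -/
def DeltaThin (G : SimpleGraph V) (δ : ℝ) : Prop :=
  ∀ (a b c : ℕ) (p q r : ℕ → V), GeoSeg G p a → GeoSeg G q b → GeoSeg G r c →
    p a = q 0 → p 0 = r 0 → q b = r c → ∀ i ≤ c,
      ∃ j, (j ≤ a ∧ (G.dist (r i) (p j) : ℝ) ≤ δ) ∨
           (j ≤ b ∧ (G.dist (r i) (q j) : ℝ) ≤ δ)

/-- The Cayley graph of a group w.r.t. a (symmetric) set `S`. -/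
def cayley {G : Type*} [Group G] (S : Set G) : SimpleGraph G :=
  SimpleGraph.fromRel fun g h => g⁻¹ * h ∈ S

/-- The type of a path `(x_n)` in a Cayley graph: the sequence `x_n⁻¹ x_{n+1}`. -/
def typ {G : Type*} [Group G] (x : ℕ → G) : ℕ → G := fun n => (x n)⁻¹ * x (n + 1)

/-- Lexicographic order on sequences. -/
def lexLe {α : Type*} [LinearOrder α] (x y : ℕ → α) : Prop :=
  x = y ∨ ∃ n, (∀ m < n, x m = y m) ∧ x n < y n

/-- Lexicographic order on the first `k` entries of sequences. -/
def lexLeUpTo {α : Type*} [LinearOrder α] (k : ℕ) (x y : ℕ → α) : Prop :=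
  (∀ i < k, x i = y i) ∨ ∃ n < k, (∀ m < n, x m = y m) ∧ x n < y n

/-- `g` can be written as a product of at most `r` elements of `S`. -/
def wordLenLe {G : Type*} [Group G] (S : Set G) (g : G) (r : ℝ) : Prop :=
  ∃ l : List G, (∀ s ∈ l, s ∈ S) ∧ l.prod = g ∧ (l.length : ℝ) ≤ r

/-- The left shift on sequences. -/
def shift {α : Type*} (x : ℕ → α) : ℕ → α := fun n => x (n + 1)

/-- The graph on `ℕ → α` induced by the left shift: `x` adjacent to `y` iff
`s x = y` or `s y = x` (and `x ≠ y`). -/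
def shiftGraph (α : Type*) : SimpleGraph (ℕ → α) :=
  SimpleGraph.fromRel fun x y => shift x = y

/-- `ρ_s(x, y) ≤ r` for the graph metric `ρ_s` of the shift graph. -/
def shiftDistLe {α : Type*} (x y : ℕ → α) (r : ℝ) : Prop :=
  ∃ w : (shiftGraph α).Walk x y, (w.length : ℝ) ≤ r

/-- Tail equivalence of sequences. -/
def tailEquiv {α : Type*} (x y : ℕ → α) : Prop :=
  ∃ T0 T1 : ℕ, ∀ n, x (T0 + n) = y (T1 + n)

/-- A finite Borel equivalence relation. -/
def IsFiniteBorelEquiv {X : Type*} [MeasurableSpace X] (F : X → X → Prop) : Prop :=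
  Equivalence F ∧ MeasurableSet {p : X × X | F p.1 p.2} ∧ ∀ x, {y | F x y}.Finite

/-- A relation is hyperfinite if it is the union of an increasing sequence of
finite Borel equivalence relations. -/
def Hyperfinite {X : Type*} [MeasurableSpace X] (E : X → X → Prop) : Prop :=
  ∃ F : ℕ → X → X → Prop, (∀ n, IsFiniteBorelEquiv (F n)) ∧
    (∀ n x y, F n x y → F (n + 1) x y) ∧ ∀ x y, E x y ↔ ∃ n, F n x y

end BA

/-!
Let `β = ⌊δ⌋`. By Kőnig's lemma, geodesics from `y 0` to the points `x m` converge to a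
geodesic ray `z` from `y 0`. Thin triangles with vertices `x 0`, `y 0`, `x m` show that beyond
index `d(x 0, y 0) + β` each of `x`, `z` lies β-close to the other, and thin triangles
`y 0, z N, y M` with `d(z N, y M)` bounded give `d(z s, y s) ≤ 2β` for every `s`. Finally, if
`x (T + n)` is β-close to `z (j n)`, the offsets `j n - n` are bounded and vary by at most `2β`
between distant indices; an offset `v` that recurs infinitely often therefore gives
`d(x (T + n), z (v + n)) ≤ 3β`, hence `d(x (T + n), y (v + n)) ≤ 5β ≤ 5δ`.
-/

namespace SimpleGraph

variable {V : Type*} {G : SimpleGraph V}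

theorem Walk.dist_getVert_le {u v : V} (w : G.Walk u v) {i j : ℕ} (hij : i ≤ j) :
    G.dist (w.getVert i) (w.getVert j) ≤ j - i := by
  have h := G.dist_le ((w.drop i).take (j - i))
  rw [Walk.take_length, Walk.drop_getVert, Nat.add_sub_cancel' hij] at h
  exact h.trans (min_le_left _ _)

theorem Connected.dist_quadrilateral (hconn : G.Connected) (a b b' a' : V) :
    G.dist a a' ≤ G.dist a b + G.dist b b' + G.dist b' a' := by
  have := hconn.dist_triangle (u := a) (v := b) (w := a')
  have := hconn.dist_triangle (u := b) (v := b') (w := a')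
  omega

theorem Connected.finite_setOf_dist_le (hconn : G.Connected)
    (hlf : ∀ v : V, (G.neighborSet v).Finite) (u : V) (r : ℕ) :
    {v | G.dist u v ≤ r}.Finite := by
  induction r with
  | zero => simp [hconn.dist_eq_zero_iff]
  | succ r ih =>
    refine (ih.biUnion fun w _ => (hlf w).insert w).subset fun v hv => ?_
    simp only [Set.mem_iUnion, Set.mem_insert_iff, mem_neighborSet]
    obtain hvr | hvr := Nat.le_succ_iff.mp hv
    · exact ⟨v, hvr, Or.inl rfl⟩
    · obtain ⟨w, hw⟩ := hconn.exists_walk_length_eq_dist u v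
      refine ⟨w.getVert r, ?_, Or.inr ?_⟩
      · simpa using w.dist_getVert_le (Nat.zero_le r)
      · have := w.adj_getVert_succ (i := r) (by omega)
        rwa [show r + 1 = w.length by omega, w.getVert_length] at this

end SimpleGraph

namespace BA

open SimpleGraph

variable {V : Type*} {G : SimpleGraph V}

theorem GeoRay.geoSeg {x : ℕ → V} (hx : GeoRay G x) (k : ℕ) : GeoSeg G x k :=
  ⟨fun i _ => hx.1 i, fun i _ j _ => hx.2 i j⟩

theorem GeoRay.dist_zero {x : ℕ → V} (hx : GeoRay G x) (n : ℕ) : G.dist (x 0) (x n) = n := by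
  simp [hx.2, Nat.dist]

theorem GeoSeg.dist_zero {p : ℕ → V} {k i : ℕ} (hp : GeoSeg G p k) (hi : i ≤ k) :
    G.dist (p 0) (p i) = i := by
  simp [hp.2 0 (Nat.zero_le k) i hi, Nat.dist]

theorem GeoSeg.dist_end {p : ℕ → V} {k i : ℕ} (hp : GeoSeg G p k) (hi : i ≤ k) :
    G.dist (p i) (p k) = k - i := by
  simp [hp.2 i hi k le_rfl, Nat.dist_eq_sub_of_le hi]

theorem exists_geoSeg (hconn : G.Connected) (u v : V) :
    ∃ p : ℕ → V, GeoSeg G p (G.dist u v) ∧ p 0 = u ∧ p (G.dist u v) = v := by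
  obtain ⟨w, hw⟩ := hconn.exists_walk_length_eq_dist u v
  have hdist : ∀ i j, i ≤ j → j ≤ G.dist u v → G.dist (w.getVert i) (w.getVert j) = j - i := by
    intro i j hij hj
    have hij' := w.dist_getVert_le hij
    have h0i := w.dist_getVert_le (Nat.zero_le i)
    have hjk := w.dist_getVert_le hj
    have huv := hconn.dist_quadrilateral u (w.getVert i) (w.getVert j) v
    rw [w.getVert_zero] at h0i
    rw [← hw, w.getVert_length] at hjk
    omega
  refine ⟨w.getVert, ⟨fun i hi => w.adj_getVert_succ (by omega), fun i hi j hj => ?_⟩,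
    w.getVert_zero, by rw [← hw, w.getVert_length]⟩
  rcases le_total i j with h | h
  · rw [hdist i j h hj, Nat.dist_eq_sub_of_le h]
  · rw [dist_comm, hdist j i h hi, Nat.dist_comm, Nat.dist_eq_sub_of_le h]

def GeoPrefixToward (G : SimpleGraph V) (u : V) (t : ℕ → V) (L : ℕ) (f : ℕ → V) : Prop :=
  ∃ m, L ≤ G.dist u (t m) ∧ ∃ p : ℕ → V, GeoSeg G p (G.dist u (t m)) ∧ p 0 = u ∧
    p (G.dist u (t m)) = t m ∧ ∀ i ≤ L, p i = f i

section GeoPrefixToward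

variable {u : V} {t f g : ℕ → V} {L : ℕ}

theorem GeoPrefixToward.mono (h : GeoPrefixToward G u t L f) {L' : ℕ} (hL : L' ≤ L) :
    GeoPrefixToward G u t L' f := by
  obtain ⟨m, hm, p, hp, hp0, hpm, hpf⟩ := h
  exact ⟨m, hm.trans' hL, p, hp, hp0, hpm, fun i hi => hpf i (hi.trans hL)⟩

theorem GeoPrefixToward.congr (h : GeoPrefixToward G u t L f) (hfg : ∀ i ≤ L, f i = g i) :
    GeoPrefixToward G u t L g := by
  obtain ⟨m, hm, p, hp, hp0, hpm, hpf⟩ := h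
  exact ⟨m, hm, p, hp, hp0, hpm, fun i hi => (hpf i hi).trans (hfg i hi)⟩

theorem GeoPrefixToward.dist_eq (h : GeoPrefixToward G u t L f) {i : ℕ} (hi : i ≤ L) :
    G.dist u (f i) = i := by
  obtain ⟨m, hm, p, hp, hp0, -, hpf⟩ := h
  rw [← hp0, ← hpf i hi, hp.dist_zero (hi.trans hm)]

/-- Kőnig's lemma: the finitely many possible prefixes of each length form an inverse system of
nonempty finite sets, so some ray `z` has all its prefixes geodesic towards points of `t`. -/
theorem exists_forall_geoPrefixToward (hconn : G.Connected)
    (hlf : ∀ v : V, (G.neighborSet v).Finite) (u : V) (t : ℕ → V)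
    (ht : ∀ L, ∃ m, L ≤ G.dist u (t m)) :
    ∃ z : ℕ → V, ∀ L, GeoPrefixToward G u t L z := by
  let α : ℕ → Type _ := fun L =>
    {f : Fin (L + 1) → V // ∃ g, GeoPrefixToward G u t L g ∧ ∀ i : Fin (L + 1), g i = f i}
  let π : {i j : ℕ} → i ≤ j → α j → α i := fun hij f =>
    ⟨f.1 ∘ Fin.castLE (by omega), by
      obtain ⟨g, hg, hgf⟩ := f.2
      exact ⟨g, hg.mono hij, fun i => hgf (Fin.castLE _ i)⟩⟩
  have hfin : ∀ L, Finite (α L) := by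
    intro L
    have := (hconn.finite_setOf_dist_le hlf u L).to_subtype
    refine Finite.of_injective
      (fun f (i : Fin (L + 1)) => (⟨f.1 i, ?_⟩ : {v | G.dist u v ≤ L})) ?_
    · obtain ⟨g, hg, hgf⟩ := f.2
      rw [Set.mem_ofPred_eq, ← hgf i, hg.dist_eq (Nat.lt_succ_iff.mp i.2)]
      exact Nat.lt_succ_iff.mp i.2
    · intro f f' hff'
      exact Subtype.ext (funext fun i => congrArg Subtype.val (congrFun hff' i))
  have hne : ∀ L, Nonempty (α L) := by
    intro L
    obtain ⟨m, hm⟩ := ht L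
    obtain ⟨p, hp, hp0, hpm⟩ := exists_geoSeg hconn u (t m)
    exact ⟨⟨fun i => p i, p, ⟨m, hm, p, hp, hp0, hpm, fun _ _ => rfl⟩, fun _ => rfl⟩⟩
  obtain ⟨F, hF⟩ := exists_seq_forall_proj_of_forall_finite π (fun _ _ => rfl)
    (fun _ _ _ _ _ _ => rfl) fun L _ => Set.toFinite _
  refine ⟨fun i => (F i).1 (Fin.last i), fun L => ?_⟩
  obtain ⟨g, hg, hgF⟩ := (F L).2
  refine hg.congr fun i hi => ?_
  rw [← hF hi]
  exact hgF ⟨i, Nat.lt_succ_of_le hi⟩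

theorem geoRay_of_forall_geoPrefixToward {z : ℕ → V} (hz : ∀ L, GeoPrefixToward G u t L z) :
    GeoRay G z ∧ z 0 = u := by
  refine ⟨⟨fun n => ?_, fun m n => ?_⟩, ?_⟩
  · obtain ⟨m, hm, p, hp, -, -, hpz⟩ := hz (n + 1)
    rw [← hpz n (Nat.le_succ n), ← hpz (n + 1) le_rfl]
    exact hp.1 n hm
  · obtain ⟨k, hk, p, hp, -, -, hpz⟩ := hz (max m n)
    rw [← hpz m (le_max_left m n), ← hpz n (le_max_right m n)]
    exact hp.2 m ((le_max_left m n).trans hk) n ((le_max_right m n).trans hk)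
  · obtain ⟨k, -, p, -, hp0, -, hpz⟩ := hz 0
    rw [← hpz 0 le_rfl, hp0]

end GeoPrefixToward

theorem DeltaThin.natFloor {δ : ℝ} (h : DeltaThin G δ) : DeltaThin G ⌊δ⌋₊ := by
  intro a b c p q r hp hq hr hpq hpr hqr i hi
  obtain ⟨j, hj⟩ := h a b c p q r hp hq hr hpq hpr hqr i hi
  refine ⟨j, hj.imp (And.imp_right ?_) (And.imp_right ?_)⟩ <;>
    exact fun hd => by exact_mod_cast Nat.le_floor hd

section Thin

variable {β : ℕ} {a b c : ℕ} {p q r : ℕ → V}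

theorem DeltaThin.exists_close_q_of_far (hconn : G.Connected) (hhyp : DeltaThin G β)
    (hp : GeoSeg G p a) (hq : GeoSeg G q b) (hr : GeoSeg G r c)
    (hpq : p a = q 0) (hpr : p 0 = r 0) (hqr : q b = r c) {i : ℕ} (hi : i ≤ c)
    (hfar : a + β < i) : ∃ j ≤ b, G.dist (r i) (q j) ≤ β := by
  obtain ⟨j, ⟨hja, hj⟩ | ⟨hjb, hj⟩⟩ := hhyp a b c p q r hp hq hr hpq hpr hqr i hi
  · have hjβ : G.dist (r i) (p j) ≤ β := by exact_mod_cast hj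
    have := hconn.dist_triangle (u := p 0) (v := p j) (w := r i)
    rw [hp.dist_zero hja, hpr, hr.dist_zero hi, SimpleGraph.dist_comm] at this
    omega
  · exact ⟨j, hjb, by exact_mod_cast hj⟩

theorem DeltaThin.exists_close_p_of_far (hconn : G.Connected) (hhyp : DeltaThin G β)
    (hp : GeoSeg G p a) (hq : GeoSeg G q b) (hr : GeoSeg G r c)
    (hpq : p a = q 0) (hpr : p 0 = r 0) (hqr : q b = r c) {i : ℕ} (hi : i ≤ c)
    (hfar : i + b + β < c) : ∃ j ≤ a, G.dist (r i) (p j) ≤ β := by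
  obtain ⟨j, ⟨hja, hj⟩ | ⟨hjb, hj⟩⟩ := hhyp a b c p q r hp hq hr hpq hpr hqr i hi
  · exact ⟨j, hja, by exact_mod_cast hj⟩
  · have hjβ : G.dist (r i) (q j) ≤ β := by exact_mod_cast hj
    have := hconn.dist_triangle (u := r i) (v := q j) (w := r c)
    rw [hr.dist_end hi, ← hqr, hq.dist_end hjb] at this
    omega

end Thin

section Limit

variable {β : ℕ} {u : V} {x z : ℕ → V}

theorem GeoRay.exists_dist_le_of_forall_geoPrefixToward (hconn : G.Connected)
    (hhyp : DeltaThin G β) (hx : GeoRay G x) (hz : ∀ L, GeoPrefixToward G u x L z) {s : ℕ}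
    (hs : G.dist (x 0) u + β < s) : ∃ j, G.dist (x s) (z j) ≤ β := by
  obtain ⟨m, hm, p, hp, hp0, hpm, hpz⟩ := hz (s + G.dist (x 0) u + β)
  obtain ⟨g, hg, hg0, hgu⟩ := exists_geoSeg hconn (x 0) u
  have hum := hconn.dist_triangle (u := u) (v := x 0) (w := x m)
  rw [SimpleGraph.dist_comm (u := u) (v := x 0), hx.dist_zero] at hum
  obtain ⟨j, hj, hdist⟩ := hhyp.exists_close_q_of_far hconn hg hp (hx.geoSeg m) (hgu.trans hp0.symm)
    hg0 hpm (by omega) hs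
  have hus := hconn.dist_quadrilateral (p 0) (x 0) (x s) (p j)
  rw [hp.dist_zero hj, hx.dist_zero, hp0, SimpleGraph.dist_comm (u := u)] at hus
  exact ⟨j, hpz j (by omega) ▸ hdist⟩

theorem GeoRay.exists_dist_le_of_forall_geoPrefixToward_rev (hconn : G.Connected)
    (hhyp : DeltaThin G β) (hx : GeoRay G x) (hz : ∀ L, GeoPrefixToward G u x L z) {s : ℕ}
    (hs : G.dist (x 0) u + β < s) : ∃ j, G.dist (z s) (x j) ≤ β := by
  obtain ⟨m, hm, p, hp, hp0, hpm, hpz⟩ := hz s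
  obtain ⟨g, hg, hg0, hgx⟩ := exists_geoSeg hconn u (x 0)
  obtain ⟨j, -, hdist⟩ := hhyp.exists_close_q_of_far hconn hg (hx.geoSeg m) hp hgx
    (hg0.trans hp0.symm) hpm.symm hm (by rwa [dist_comm])
  exact ⟨j, hpz s le_rfl ▸ hdist⟩

end Limit

theorem GeoRay.dist_le_two_mul_of_frequently_close (hconn : G.Connected) {β C : ℕ}
    (hhyp : DeltaThin G β) {z y : ℕ → V} (hz : GeoRay G z) (hy : GeoRay G y) (h0 : z 0 = y 0)
    (hzy : ∀ N₀, ∃ N ≥ N₀, ∃ M, G.dist (z N) (y M) ≤ C) (s : ℕ) :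
    G.dist (z s) (y s) ≤ 2 * β := by
  obtain ⟨N, hN, M, hNM⟩ := hzy (s + 2 * C + β + 1)
  obtain ⟨q, hq, hq0, hqM⟩ := exists_geoSeg hconn (z N) (y M)
  have hM := hconn.dist_triangle (u := z 0) (v := y M) (w := z N)
  rw [hz.dist_zero, h0, hy.dist_zero, SimpleGraph.dist_comm (u := y M)] at hM
  obtain ⟨j, -, hj⟩ := hhyp.exists_close_p_of_far (i := s) hconn (hz.geoSeg N) hq (hy.geoSeg M)
    hq0.symm h0 hqM (by omega) (by omega)
  have hjs := hconn.dist_triangle (u := z 0) (v := y s) (w := z j)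
  have hsj := hconn.dist_triangle (u := y 0) (v := z j) (w := y s)
  have hzs := hconn.dist_triangle (u := z s) (v := z j) (w := y s)
  rw [hz.dist_zero, h0, hy.dist_zero] at hjs
  rw [← h0, hz.dist_zero, h0, hy.dist_zero, SimpleGraph.dist_comm] at hsj
  rw [hz.2, SimpleGraph.dist_comm (u := z j)] at hzs
  simp only [Nat.dist] at hzs
  omega

theorem GeoRay.exists_fellowTravel (hconn : G.Connected) {β T : ℕ} {x z : ℕ → V}
    (hx : GeoRay G x) (hz : GeoRay G z) (hT : G.dist (x 0) (z 0) + β ≤ T)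
    (hclose : ∀ n, ∃ j, G.dist (x (T + n)) (z j) ≤ β) :
    ∃ v ≤ T + G.dist (x 0) (z 0) + β, ∀ n, G.dist (x (T + n)) (z (v + n)) ≤ 3 * β := by
  set D := G.dist (x 0) (z 0)
  choose j hj using hclose
  have hbound : ∀ n, T + n ≤ j n + D + β ∧ j n ≤ T + n + D + β := by
    intro n
    have h1 := hconn.dist_quadrilateral (x 0) (z 0) (z (j n)) (x (T + n))
    have h2 := hconn.dist_quadrilateral (z 0) (x 0) (x (T + n)) (z (j n))
    rw [hx.dist_zero, hz.dist_zero, SimpleGraph.dist_comm (u := z (j n))] at h1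
    rw [hx.dist_zero, hz.dist_zero, SimpleGraph.dist_comm (u := z 0)] at h2
    have := hj n
    omega
  have hstable : ∀ m n, Nat.dist (T + m) (T + n) ≤ Nat.dist (j m) (j n) + 2 * β ∧
      Nat.dist (j m) (j n) ≤ Nat.dist (T + m) (T + n) + 2 * β := by
    intro m n
    have h1 := hconn.dist_quadrilateral (x (T + m)) (z (j m)) (z (j n)) (x (T + n))
    have h2 := hconn.dist_quadrilateral (z (j m)) (x (T + m)) (x (T + n)) (z (j n))
    rw [hx.2, hz.2, SimpleGraph.dist_comm (u := z (j n))] at h1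
    rw [hx.2, hz.2, SimpleGraph.dist_comm (u := z (j m))] at h2
    have := hj m
    have := hj n
    omega
  obtain ⟨v, hv, hvinf⟩ : ∃ v ≤ T + D + β, {n | j n = v + n}.Infinite := by
    obtain ⟨⟨v, hv⟩, hinf⟩ := Finite.exists_infinite_fiber fun n =>
      (⟨j n - n, by have := hbound n; omega⟩ : Fin (T + D + β + 1))
    refine ⟨v, by omega, (Set.infinite_coe_iff.mp hinf).mono fun n hn => ?_⟩
    simp only [Set.mem_preimage, Set.mem_singleton_iff, Fin.mk.injEq] at hn
    have := hbound n
    simp only [Set.mem_ofPred_eq]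
    omega
  refine ⟨v, hv, fun n => ?_⟩
  obtain ⟨n', hn', hnn'⟩ := hvinf.exists_gt (n + T + D + 2 * β)
  have hjn : Nat.dist (j n) (v + n) ≤ 2 * β := by
    have := hstable n n'
    have := hbound n
    have := hbound n'
    simp only [Set.mem_ofPred_eq] at hn'
    simp only [Nat.dist] at *
    omega
  calc G.dist (x (T + n)) (z (v + n))
      ≤ G.dist (x (T + n)) (z (j n)) + G.dist (z (j n)) (z (v + n)) := hconn.dist_triangle
    _ ≤ β + 2 * β := by rw [hz.2]; exact add_le_add (hj n) hjn
    _ = 3 * β := by ring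

end BA

open BA in
/-- Two geodesic rays converging to the same boundary point of a
δ-hyperbolic locally finite graph eventually `5δ`-fellow-travel, after cutting
initial segments of controlled length. -/
theorem stmt1 {V : Type*} (G : SimpleGraph V) (hconn : G.Connected)
    (hlf : ∀ v : V, (G.neighborSet v).Finite) (δ : ℝ) (hδ : 0 < δ)
    (hhyp : DeltaThin G δ) (x y : ℕ → V)
    (hx : GeoRay G x) (hy : GeoRay G y)
    (hasymp : Asymp G x y) :
    ∃ T0 T1 : ℕ, (T0 : ℝ) ≤ 2 * ((G.dist (x 0) (y 0) : ℝ) + 3 * δ + 2) ∧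
      (T1 : ℝ) ≤ 2 * ((G.dist (x 0) (y 0) : ℝ) + 3 * δ + 2) ∧
      ∀ n : ℕ, (G.dist (x (T0 + n)) (y (T1 + n)) : ℝ) ≤ 5 * δ := by
  set D := G.dist (x 0) (y 0)
  set β := ⌊δ⌋₊
  have hβ : (β : ℝ) ≤ δ := Nat.floor_le hδ.le
  have hthin : DeltaThin G β := hhyp.natFloor
  have hunbdd : ∀ L, ∃ m, L ≤ G.dist (y 0) (x m) := fun L => ⟨L + D, by
    have := hconn.dist_triangle (u := x 0) (v := y 0) (w := x (L + D))
    rw [hx.dist_zero] at this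
    omega⟩
  obtain ⟨z, hz⟩ := exists_forall_geoPrefixToward hconn hlf (y 0) x hunbdd
  obtain ⟨hzray, hz0⟩ := geoRay_of_forall_geoPrefixToward hz
  have hzy : ∀ s, G.dist (z s) (y s) ≤ 2 * β := by
    obtain ⟨K, hK, -⟩ := hasymp
    refine hzray.dist_le_two_mul_of_frequently_close hconn hthin hy hz0 (C := β + K) fun N₀ => ?_
    obtain ⟨w, hw⟩ := hx.exists_dist_le_of_forall_geoPrefixToward_rev hconn hthin hz
      (s := N₀ + D + β + 1) (by omega)
    obtain ⟨M, walk, hwalk⟩ := hK w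
    exact ⟨_, by omega, M, hconn.dist_triangle.trans (add_le_add hw ((SimpleGraph.dist_le walk).trans hwalk))⟩
  obtain ⟨v, hv, hxz⟩ := hx.exists_fellowTravel hconn hzray (T := D + β + 1) (by rw [hz0]; omega)
    fun n => hx.exists_dist_le_of_forall_geoPrefixToward hconn hthin hz (by omega)
  rw [hz0] at hv
  have hD : (0 : ℝ) ≤ D := Nat.cast_nonneg D
  refine ⟨D + β + 1, v, by push_cast; linarith, ?_, fun n => ?_⟩
  · have : (v : ℝ) ≤ D + β + 1 + D + β := by exact_mod_cast hv
    linarith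
  · have : G.dist (x (D + β + 1 + n)) (y (v + n)) ≤ 5 * β :=
      hconn.dist_triangle.trans ((add_le_add (hxz n) (hzy (v + n))).trans_eq (by ring))
    calc (G.dist (x (D + β + 1 + n)) (y (v + n)) : ℝ) ≤ 5 * β := by exact_mod_cast this
      _ ≤ 5 * δ := by linarith
end

section
/- Let G be a hyperbolic group with finite symmetric generating set S, and for each boundary point η let σ_η ∈ S^ℕ be the ≤_lex-minimal type of a geodesic ray from the identity converging to η. Then for all η, ζ ∈ ∂G, ρ(η, ζ) ≤ ρ_s(σ_η, σ_ζ), where ρ is the Schreier graph metric on ∂G induced by the boundary action and ρ_s is the shift-graph metric on S^ℕ. -/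
/-!
A walk of length `L` in the shift graph from `σ_η` to `σ_ζ` yields `a + b ≤ L` with
`shift^[a] σ_η = shift^[b] σ_ζ`: the rays `Δη` and `Δζ` follow the same generators from
time `a`, resp. `b`, on. Hence `g := Δζ b * (Δη a)⁻¹` carries the tail of `Δη` onto the tail
of `Δζ`, so `g η = ζ`; and `g` is spelled by the first `b` letters of `σ_ζ` followed by the
inverses of the first `a` letters of `σ_η`, so its word length is at most `a + b ≤ L`.
-/

namespace BA

open SimpleGraph

section Walks

variable {V : Type*} {Γ : SimpleGraph V} {x y : ℕ → V}

lemma exists_walk_length_eq_of_adj_succ (hx : ∀ n, Γ.Adj (x n) (x (n + 1))) (n d : ℕ) :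
    ∃ w : Γ.Walk (x n) (x (n + d)), w.length = d := by
  induction d with
  | zero => exact ⟨Walk.nil, rfl⟩
  | succ d ih =>
    obtain ⟨w, hw⟩ := ih
    exact ⟨w.concat (hx (n + d)), by simp [hw]⟩

lemma exists_walk_length_le_of_tail_eq (hx : ∀ n, Γ.Adj (x n) (x (n + 1))) {a b : ℕ}
    (htail : ∀ n, x (a + n) = y (b + n)) (n : ℕ) :
    ∃ m, ∃ w : Γ.Walk (x n) (y m), w.length ≤ a := by
  by_cases han : a ≤ n
  · have hend : x n = y (b + (n - a)) := by rw [← htail, Nat.add_sub_cancel' han]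
    exact ⟨b + (n - a), Walk.nil.copy rfl hend, by simp⟩
  · obtain ⟨w, hw⟩ := exists_walk_length_eq_of_adj_succ hx n (a - n)
    have hend : x (n + (a - n)) = y b := by
      rw [Nat.add_sub_cancel' (by omega), ← add_zero a, htail, add_zero]
    exact ⟨b, w.copy rfl hend, by rw [Walk.length_copy, hw]; omega⟩

lemma asymp_of_tail_eq (hx : ∀ n, Γ.Adj (x n) (x (n + 1)))
    (hy : ∀ n, Γ.Adj (y n) (y (n + 1))) {a b : ℕ} (htail : ∀ n, x (a + n) = y (b + n)) :
    Asymp Γ x y := by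
  refine ⟨a + b, fun n => ?_, fun m => ?_⟩
  · obtain ⟨m, w, hw⟩ := exists_walk_length_le_of_tail_eq hx htail n
    exact ⟨m, w, by omega⟩
  · obtain ⟨n, w, hw⟩ :=
      exists_walk_length_le_of_tail_eq hy (fun n => (htail n).symm) m
    exact ⟨n, w.reverse, by rw [Walk.length_reverse]; omega⟩

end Walks

lemma exists_tail_eq_of_shiftGraph_walk {α : Type*} {x y : ℕ → α}
    (w : (shiftGraph α).Walk x y) :
    ∃ a b, a + b ≤ w.length ∧ ∀ n, x (a + n) = y (b + n) := by
  induction w with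
  | nil => exact ⟨0, 0, le_rfl, fun _ => rfl⟩
  | @cons u v z h w ih =>
    obtain ⟨a, b, hab, htail⟩ := ih
    rw [shiftGraph, fromRel_adj] at h
    rcases h.2 with rfl | rfl
    · refine ⟨a + 1, b, by simp; omega, fun n => ?_⟩
      rw [← htail, shift, Nat.add_right_comm]
    · refine ⟨a, b + 1, by simp; omega, fun n => ?_⟩
      show v (a + n + 1) = z (b + 1 + n)
      rw [Nat.add_right_comm b, Nat.add_assoc, Nat.add_assoc, htail]

section Cayley

variable {G : Type*} [Group G] {S : Set G}

lemma cayley_adj_mul_left {x y : G} (h : (cayley S).Adj x y) (g : G) :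
    (cayley S).Adj (g * x) (g * y) := by
  rw [cayley, fromRel_adj] at h ⊢
  simpa [mul_assoc] using h

lemma inv_mul_mem_of_cayley_adj (hsym : ∀ s ∈ S, s⁻¹ ∈ S) {x y : G}
    (h : (cayley S).Adj x y) : x⁻¹ * y ∈ S := by
  rw [cayley, fromRel_adj] at h
  rcases h.2 with h | h
  · exact h
  · simpa using hsym _ h

lemma prod_map_typ_range (x : ℕ → G) (k : ℕ) :
    ((List.range k).map (typ x)).prod = (x 0)⁻¹ * x k := by
  induction k with
  | zero => simp
  | succ k ih => simp [List.range_succ, ih, typ, mul_assoc]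

lemma mul_apply_eq_of_typ_tail_eq {x y : ℕ → G} {a b : ℕ}
    (htyp : ∀ n, typ x (a + n) = typ y (b + n)) (n : ℕ) :
    y b * (x a)⁻¹ * x (a + n) = y (b + n) := by
  induction n with
  | zero => simp
  | succ n ih =>
    calc y b * (x a)⁻¹ * x (a + (n + 1))
        = y b * (x a)⁻¹ * x (a + n) * typ x (a + n) := by simp [typ, mul_assoc, ← Nat.add_assoc]
      _ = y (b + (n + 1)) := by rw [ih, htyp, typ, mul_inv_cancel_left]; rfl

namespace wordLenLe

lemma mono {g : G} {r t : ℝ} (h : wordLenLe S g r) (hrt : r ≤ t) : wordLenLe S g t :=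
  let ⟨l, hS, hprod, hlen⟩ := h
  ⟨l, hS, hprod, hlen.trans hrt⟩

lemma mul {g h : G} {r t : ℝ} (hg : wordLenLe S g r) (hh : wordLenLe S h t) :
    wordLenLe S (g * h) (r + t) := by
  obtain ⟨l, hS, rfl, hlen⟩ := hg
  obtain ⟨l', hS', rfl, hlen'⟩ := hh
  refine ⟨l ++ l', fun s hs => ?_, List.prod_append, ?_⟩
  · rcases List.mem_append.1 hs with hs | hs
    exacts [hS s hs, hS' s hs]
  · push_cast [List.length_append]
    linarith

lemma inv (hsym : ∀ s ∈ S, s⁻¹ ∈ S) {g : G} {r : ℝ} (hg : wordLenLe S g r) :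
    wordLenLe S g⁻¹ r := by
  obtain ⟨l, hS, rfl, hlen⟩ := hg
  refine ⟨(l.map (·⁻¹)).reverse, fun s hs => ?_, (List.prod_inv_reverse l).symm, by simpa using hlen⟩
  obtain ⟨t, ht, rfl⟩ := List.mem_map.1 (List.mem_reverse.1 hs)
  exact hsym t (hS t ht)

end wordLenLe

lemma wordLenLe_inv_mul_of_cayley_adj (hsym : ∀ s ∈ S, s⁻¹ ∈ S) {x : ℕ → G}
    (hx : ∀ n, (cayley S).Adj (x n) (x (n + 1))) (k : ℕ) :
    wordLenLe S ((x 0)⁻¹ * x k) k := by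
  refine ⟨(List.range k).map (typ x), fun s hs => ?_, prod_map_typ_range x k, by simp⟩
  obtain ⟨i, -, rfl⟩ := List.mem_map.1 hs
  exact inv_mul_mem_of_cayley_adj hsym (hx i)

end Cayley

end BA

open BA in
theorem stmt11_general {G : Type*} [Group G] (S : Finset G)
    (hsym : ∀ s ∈ S, s⁻¹ ∈ S)
    (Δη Δζ : ℕ → G)
    (hΔη : GeoRay (cayley (S : Set G)) Δη) (h0η : Δη 0 = 1)
    (hΔζ : GeoRay (cayley (S : Set G)) Δζ) (h0ζ : Δζ 0 = 1)
    (M : ℝ) (hdist : shiftDistLe (typ Δη) (typ Δζ) M) :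
    ∃ g : G, wordLenLe (S : Set G) g M ∧
      Asymp (cayley (S : Set G)) (fun n => g * Δη n) Δζ := by
  obtain ⟨w, hw⟩ := hdist
  obtain ⟨a, b, hab, htyp⟩ := exists_tail_eq_of_shiftGraph_walk w
  refine ⟨Δζ b * (Δη a)⁻¹, ?_, ?_⟩
  · have hword := (wordLenLe_inv_mul_of_cayley_adj hsym hΔζ.1 b).mul
      ((wordLenLe_inv_mul_of_cayley_adj hsym hΔη.1 a).inv hsym)
    rw [h0η, h0ζ, inv_one, one_mul, one_mul] at hword
    have hba : (b : ℝ) + a ≤ w.length := by exact_mod_cast (by omega : b + a ≤ w.length)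
    exact hword.mono (hba.trans hw)
  · exact asymp_of_tail_eq (fun n => cayley_adj_mul_left (hΔη.1 n) _) hΔζ.1
      (mul_apply_eq_of_typ_tail_eq htyp)

open BA in
/-- `ρ(η, ζ) ≤ ρ_s(σ_η, σ_ζ)`. If the lexicographically minimal
rays `Δη ∈ CGR(e,η)`, `Δζ ∈ CGR(e,ζ)` have types at shift-graph distance at
most `M`, then some `g` of word length at most `M` maps `η` to `ζ`. -/
theorem stmt11 {G : Type*} [Group G] [LinearOrder G] (S : Finset G)
    (hsym : ∀ s ∈ S, s⁻¹ ∈ S) (hgen : Subgroup.closure (S : Set G) = ⊤)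
    (δ : ℝ) (hδ : 0 < δ) (hhyp : DeltaThin (cayley (S : Set G)) δ)
    (Δη Δζ : ℕ → G)
    (hΔη : GeoRay (cayley (S : Set G)) Δη) (h0η : Δη 0 = 1)
    (hminη : ∀ Δ' : ℕ → G, GeoRay (cayley (S : Set G)) Δ' → Δ' 0 = 1 →
      Asymp (cayley (S : Set G)) Δ' Δη → lexLe (typ Δη) (typ Δ'))
    (hΔζ : GeoRay (cayley (S : Set G)) Δζ) (h0ζ : Δζ 0 = 1)
    (hminζ : ∀ Δ' : ℕ → G, GeoRay (cayley (S : Set G)) Δ' → Δ' 0 = 1 →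
      Asymp (cayley (S : Set G)) Δ' Δζ → lexLe (typ Δζ) (typ Δ'))
    (M : ℝ) (hdist : shiftDistLe (typ Δη) (typ Δζ) M) :
    ∃ g : G, wordLenLe (S : Set G) g M ∧
      Asymp (cayley (S : Set G)) (fun n => g * Δη n) Δζ :=
  stmt11_general S hsym Δη Δζ hΔη h0η hΔζ h0ζ M hdist
end

section
/- Let S be a countable set. The tail equivalence relation on S^ℕ — where (x_n) R (y_n) iff there exist T_0, T_1 ∈ ℕ with x_{T_0+n} = y_{T_1+n} for all n — is a hyperfinite Borel equivalence relation. -/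
/-!
Coding each symbol `s` as `e s` copies of `false` followed by one `true`, for an injection
`e : S → ℕ`, is a Borel injection `S^ℕ → 2^ℕ` reducing tail equivalence to tail equivalence on
`2^ℕ`, so it suffices to treat a finite alphabet.

There the eventually periodic sequences lie in the increasing finite sets `periodicWithin n`. For
the others we build decreasing Borel marker sets `markerLevel n`, each met by every orbit of the
shift within bounded time. Along an orbit, the blocks between consecutive level-`n` markers have
bounded codes, and by aperiodicity these codes are not eventually constant, so local maxima of the
code sequence recur. Level `n + 1` keeps the markers selected by the parity of the distance to the
next local maximum: this shift-invariant rule selects one of any three consecutive markers but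
never two consecutive ones. Hence level-`n` markers are `2 ^ n` apart, so the intersection of all
levels meets each orbit at most once and can be discarded. Identifying two sequences whose orbits
first hit level `n` at the same point gives finite Borel equivalence relations increasing to tail
equivalence.
-/

open Function MeasureTheory Filter

section Measurability

variable {X β : Type*} [MeasurableSpace X] [MeasurableSpace β]

lemma Nat.sInf_setOf_eq_iff {P : ℕ → Prop} {k : ℕ} :
    sInf {d | P d} = k ↔ (P k ∧ ∀ j < k, ¬ P j) ∨ (k = 0 ∧ ∀ d, ¬ P d) := by
  by_cases hne : ∃ d, P d
  · have hmin : ∀ j < sInf {d | P d}, ¬ P j := fun j hj => Nat.notMem_of_lt_sInf hj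
    have hmem : P (sInf {d | P d}) := Nat.sInf_mem hne
    constructor
    · rintro rfl; exact .inl ⟨hmem, hmin⟩
    · rintro (⟨hk, hlt⟩ | ⟨-, hnone⟩)
      · exact le_antisymm (Nat.sInf_le hk) (not_lt.1 fun h => hlt _ h hmem)
      · exact absurd hne (not_exists.2 hnone)
  · simp only [not_exists] at hne
    simp [hne, eq_comm]

lemma measurable_sInf_nat {P : ℕ → X → Prop} (hP : ∀ d, Measurable (P d)) :
    Measurable fun x => sInf {d | P d x} := by
  refine measurable_to_countable' fun k => ?_
  simp only [Set.preimage, Set.mem_singleton_iff, Nat.sInf_setOf_eq_iff]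
  exact measurableSet_setOfPred.2 (by fun_prop)

lemma Measurable.comp_natIndex {F : ℕ → X → β} (hF : ∀ k, Measurable (F k)) {g : X → ℕ}
    (hg : Measurable g) : Measurable fun x => F (g x) x :=
  (measurable_from_prod_countable_left (f := fun q : X × ℕ => F q.2 q.1) hF).comp
    (measurable_id.prodMk hg)

end Measurability

namespace BA

section Shift

variable {α : Type*}

def shiftBy (d : ℕ) (x : ℕ → α) : ℕ → α := fun n => x (d + n)

@[simp] lemma shiftBy_apply (d : ℕ) (x : ℕ → α) (n : ℕ) : shiftBy d x n = x (d + n) := rfl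

@[simp] lemma shiftBy_zero (x : ℕ → α) : shiftBy 0 x = x := by
  funext n; simp

lemma shiftBy_shiftBy (d e : ℕ) (x : ℕ → α) : shiftBy d (shiftBy e x) = shiftBy (e + d) x := by
  funext n; simp [Nat.add_assoc]

lemma shiftBy_add_of_eq {x y : ℕ → α} {a b : ℕ} (h : shiftBy a x = shiftBy b y) (t : ℕ) :
    shiftBy (a + t) x = shiftBy (b + t) y := by
  rw [← shiftBy_shiftBy, ← shiftBy_shiftBy, h]

lemma tailEquiv_iff {x y : ℕ → α} : tailEquiv x y ↔ ∃ a b, shiftBy a x = shiftBy b y := by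
  simp only [tailEquiv, funext_iff, shiftBy_apply]

lemma tailEquiv_equivalence : Equivalence (tailEquiv (α := α)) := by
  refine ⟨fun x => tailEquiv_iff.2 ⟨0, 0, rfl⟩, fun h => ?_, fun hxy hyz => ?_⟩
  · obtain ⟨a, b, h⟩ := tailEquiv_iff.1 h
    exact tailEquiv_iff.2 ⟨b, a, h.symm⟩
  · obtain ⟨a, b, hxy⟩ := tailEquiv_iff.1 hxy
    obtain ⟨c, d, hyz⟩ := tailEquiv_iff.1 hyz
    refine tailEquiv_iff.2 ⟨a + c, d + b, ?_⟩
    rw [shiftBy_add_of_eq hxy, add_comm b, shiftBy_add_of_eq hyz, add_comm]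

def EventuallyPeriodic (x : ℕ → α) : Prop :=
  ∃ p d, 0 < d ∧ shiftBy p x = shiftBy (p + d) x

lemma eventuallyPeriodic_shiftBy_iff {x : ℕ → α} (q : ℕ) :
    EventuallyPeriodic (shiftBy q x) ↔ EventuallyPeriodic x := by
  constructor
  · rintro ⟨p, d, hd, h⟩
    refine ⟨q + p, d, hd, ?_⟩
    rwa [shiftBy_shiftBy, shiftBy_shiftBy, ← add_assoc] at h
  · rintro ⟨p, d, hd, h⟩
    refine ⟨p, d, hd, ?_⟩
    rw [shiftBy_shiftBy, shiftBy_shiftBy, add_comm q, add_comm q]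
    exact shiftBy_add_of_eq h q

lemma eventuallyPeriodic_iff_of_tailEquiv {x y : ℕ → α} (h : tailEquiv x y) :
    EventuallyPeriodic x ↔ EventuallyPeriodic y := by
  obtain ⟨a, b, h⟩ := tailEquiv_iff.1 h
  rw [← eventuallyPeriodic_shiftBy_iff a, h, eventuallyPeriodic_shiftBy_iff]

end Shift

section MeasurableShift

variable {α X : Type*} [MeasurableSpace α] [MeasurableSpace X]

@[fun_prop]
lemma measurable_shiftBy (d : ℕ) : Measurable (shiftBy (α := α) d) :=
  measurable_pi_lambda _ fun _ => measurable_pi_apply _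

lemma Measurable.shiftBy_natIndex {f : X → ℕ → α} (hf : Measurable f) {g : X → ℕ}
    (hg : Measurable g) : Measurable fun x => shiftBy (g x) (f x) :=
  Measurable.comp_natIndex (fun k => (measurable_shiftBy k).comp hf) hg

@[fun_prop]
lemma measurable_eventuallyPeriodic [MeasurableSingletonClass α] [Countable α] :
    Measurable (EventuallyPeriodic (α := α)) := by
  unfold EventuallyPeriodic; fun_prop

lemma measurableSet_tailEquiv [MeasurableSingletonClass α] [Countable α] :
    MeasurableSet {p : (ℕ → α) × (ℕ → α) | tailEquiv p.1 p.2} := by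
  simp only [tailEquiv, Set.ofPred_exists, Set.ofPred_forall]
  exact .iUnion fun a => .iUnion fun b => .iInter fun n =>
    measurableSet_eq_fun (by fun_prop) (by fun_prop)

end MeasurableShift

section Hyperfinite

variable {X Y : Type*} [MeasurableSpace X] [MeasurableSpace Y] {f : X → Y}

lemma IsFiniteBorelEquiv.comap {F : Y → Y → Prop} (h : IsFiniteBorelEquiv F)
    (hf : Measurable f) (hinj : Injective f) : IsFiniteBorelEquiv fun x x' => F (f x) (f x') := by
  obtain ⟨hF, hmeas, hfin⟩ := h
  refine ⟨⟨fun x => hF.refl _, hF.symm, hF.trans⟩, ?_, fun x => (hfin (f x)).preimage hinj.injOn⟩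
  exact hmeas.preimage (hf.prodMap hf)

lemma Hyperfinite.comap {E : X → X → Prop} {E' : Y → Y → Prop} (h : Hyperfinite E')
    (hf : Measurable f) (hinj : Injective f) (hE : ∀ x x', E x x' ↔ E' (f x) (f x')) :
    Hyperfinite E := by
  obtain ⟨F, hF, hmono, hunion⟩ := h
  exact ⟨fun n x x' => F n (f x) (f x'), fun n => (hF n).comap hf hinj,
    fun n x x' => hmono n _ _, fun x x' => (hE x x').trans (hunion _ _)⟩

end Hyperfinite

section UnaryCode

variable {S : Type*} (e : S → ℕ)

def cumLen (x : ℕ → S) (i : ℕ) : ℕ := ∑ j ∈ Finset.range i, (e (x j) + 1)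

open Classical in
/-- The symbol `s` is written as `e s` copies of `false` followed by one `true`, so the `true`s
of the code of `x` sit at the positions `cumLen e x (i + 1) - 1`. -/
noncomputable def unaryCode (x : ℕ → S) : ℕ → Bool :=
  fun k => decide (k + 1 ∈ Set.range (cumLen e x))

variable {e}

lemma cumLen_strictMono (x : ℕ → S) : StrictMono (cumLen e x) :=
  strictMono_nat_of_lt_succ fun i => by simp [cumLen, Finset.sum_range_succ]

lemma cumLen_add (x : ℕ → S) (a i : ℕ) :
    cumLen e x (a + i) = cumLen e x a + cumLen e (shiftBy a x) i :=
  Finset.sum_range_add _ a i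

lemma unaryCode_eq_true {x : ℕ → S} {k : ℕ} :
    unaryCode e x k = true ↔ ∃ i, cumLen e x i = k + 1 := by
  simp [unaryCode]

lemma unaryCode_shiftBy (x : ℕ → S) (a : ℕ) :
    unaryCode e (shiftBy a x) = shiftBy (cumLen e x a) (unaryCode e x) := by
  funext k
  rw [shiftBy_apply, Bool.eq_iff_iff, unaryCode_eq_true, unaryCode_eq_true]
  constructor
  · rintro ⟨i, hi⟩
    exact ⟨a + i, by rw [cumLen_add, hi, add_assoc]⟩
  · rintro ⟨j, hj⟩
    obtain ⟨i, rfl⟩ : ∃ i, j = a + i :=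
      Nat.exists_eq_add_of_le ((cumLen_strictMono (e := e) x).lt_iff_lt.1 (by omega)).le
    exact ⟨i, by rw [cumLen_add] at hj; omega⟩

lemma unaryCode_injective (he : Injective e) : Injective (unaryCode (S := S) e) := by
  intro x y h
  have hrange : Set.range (cumLen e x) = Set.range (cumLen e y) := by
    ext (_ | k)
    · exact ⟨fun _ => ⟨0, rfl⟩, fun _ => ⟨0, rfl⟩⟩
    · simpa [unaryCode] using congrFun h k
  have hcum := ((cumLen_strictMono x).range_inj (cumLen_strictMono y)).1 hrange
  funext i
  apply he
  have := congrFun hcum (i + 1)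
  simp only [cumLen, Finset.sum_range_succ] at this
  have := congrFun hcum i
  simp only [cumLen] at this
  omega

lemma tailEquiv_unaryCode_iff (he : Injective e) {x y : ℕ → S} :
    tailEquiv (unaryCode e x) (unaryCode e y) ↔ tailEquiv x y := by
  simp only [tailEquiv_iff]
  constructor
  · rintro ⟨A, B, hAB⟩
    -- realign both codes just after the code of `x A`, which ends beyond position `A`
    set m := cumLen e x (A + 1)
    have hm : A + 1 ≤ m := (cumLen_strictMono x).id_le _
    obtain ⟨j, hj⟩ : ∃ j, cumLen e y j = B + (m - A) := by
      have hx : unaryCode e x (A + (m - 1 - A)) = true :=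
        unaryCode_eq_true.2 ⟨A + 1, by omega⟩
      rw [← shiftBy_apply A (unaryCode e x), hAB, shiftBy_apply, unaryCode_eq_true] at hx
      obtain ⟨j, hj⟩ := hx
      exact ⟨j, by omega⟩
    refine ⟨A + 1, j, unaryCode_injective he ?_⟩
    rw [unaryCode_shiftBy, unaryCode_shiftBy, hj, ← shiftBy_add_of_eq hAB]
    congr 1
    omega
  · rintro ⟨a, b, h⟩
    exact ⟨cumLen e x a, cumLen e y b, by rw [← unaryCode_shiftBy, ← unaryCode_shiftBy, h]⟩

variable [MeasurableSpace S] [MeasurableSingletonClass S] [Countable S]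

lemma measurable_cumLen (i : ℕ) : Measurable fun x : ℕ → S => cumLen e x i :=
  Finset.measurable_sum _ fun j _ =>
    ((measurable_of_countable e).comp (measurable_pi_apply j)).add_const 1

lemma measurable_unaryCode : Measurable (unaryCode (S := S) e) := by
  refine measurable_pi_lambda _ fun k => measurable_to_bool ?_
  have : (fun x => unaryCode e x k) ⁻¹' {true} = ⋃ i, {x | cumLen e x i = k + 1} := by
    ext x; simp [unaryCode_eq_true]
  rw [this]
  exact .iUnion fun i => measurable_cumLen i (measurableSet_singleton _)

end UnaryCode

section Periodic

variable {α : Type*}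

lemma finite_setOf_shiftBy_eq [Finite α] (p : ℕ) (w : ℕ → α) :
    {y : ℕ → α | shiftBy p y = w}.Finite := by
  refine Set.Finite.of_finite_image (f := fun y (k : Fin p) => y k) (Set.toFinite _) ?_
  rintro y (hy : shiftBy p y = w) y' (hy' : shiftBy p y' = w) h
  funext k
  rcases lt_or_ge k p with hk | hk
  · exact congrFun h ⟨k, hk⟩
  · obtain ⟨t, rfl⟩ := Nat.exists_eq_add_of_le hk
    exact (congrFun hy t).trans (congrFun hy' t).symm

lemma finite_setOf_shiftBy_eq_shiftBy [Finite α] (i : ℕ) {d : ℕ} (hd : 0 < d) :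
    {z : ℕ → α | shiftBy i z = shiftBy (i + d) z}.Finite := by
  refine Set.Finite.of_finite_image (f := fun z (k : Fin (i + d)) => z k) (Set.toFinite _) ?_
  rintro y (hy : shiftBy i y = shiftBy (i + d) y) y' (hy' : shiftBy i y' = shiftBy (i + d) y') h
  funext k
  induction k using Nat.strong_induction_on with
  | _ k ih =>
    rcases lt_or_ge k (i + d) with hk | hk
    · exact congrFun h ⟨k, hk⟩
    · obtain ⟨t, rfl⟩ := Nat.exists_eq_add_of_le hk
      calc y (i + d + t) = y (i + t) := (congrFun hy t).symm
        _ = y' (i + t) := ih _ (by omega)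
        _ = y' (i + d + t) := congrFun hy' t

def periodicWithin (n : ℕ) : Set (ℕ → α) :=
  {z | ∃ i ≤ n, ∃ d ≤ n, 0 < d ∧ shiftBy i z = shiftBy (i + d) z}

lemma finite_periodicWithin [Finite α] (n : ℕ) : (periodicWithin (α := α) n).Finite := by
  refine ((Set.finite_Iic n).biUnion fun i _ => (Set.finite_Ioc 0 n).biUnion
    fun d hd => finite_setOf_shiftBy_eq_shiftBy i hd.1).subset ?_
  rintro z ⟨i, hi, d, hdn, hd, h⟩
  simp only [Set.mem_iUnion]
  exact ⟨i, hi, d, ⟨hd, hdn⟩, h⟩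

lemma periodicWithin_mono {m n : ℕ} (h : m ≤ n) :
    periodicWithin (α := α) m ⊆ periodicWithin n := by
  rintro z ⟨i, hi, d, hd, hd0, hz⟩
  exact ⟨i, hi.trans h, d, hd.trans h, hd0, hz⟩

lemma EventuallyPeriodic.exists_mem_periodicWithin {z : ℕ → α} (h : EventuallyPeriodic z) :
    ∃ n, z ∈ periodicWithin n := by
  obtain ⟨i, d, hd, hz⟩ := h
  exact ⟨i + d, i, by omega, d, by omega, hd, hz⟩

lemma EventuallyPeriodic.of_mem_periodicWithin {z : ℕ → α} {n : ℕ} (h : z ∈ periodicWithin n) :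
    EventuallyPeriodic z := by
  obtain ⟨i, -, d, -, hd, hz⟩ := h
  exact ⟨i, d, hd, hz⟩

end Periodic

section Hitting

variable {α : Type*}

def IsSyndetic (T : Set (ℕ → α)) (G : ℕ) : Prop :=
  ∀ z, ¬ EventuallyPeriodic z → ∃ p ≤ G, shiftBy p z ∈ T

noncomputable def hitTime (T : Set (ℕ → α)) (z : ℕ → α) : ℕ := sInf {p | shiftBy p z ∈ T}

noncomputable def hitPoint (T : Set (ℕ → α)) (z : ℕ → α) : ℕ → α := shiftBy (hitTime T z) z

variable {T : Set (ℕ → α)} {z : ℕ → α}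

lemma hitTime_le_of_mem {p : ℕ} (h : shiftBy p z ∈ T) : hitTime T z ≤ p := Nat.sInf_le h

lemma notMem_of_lt_hitTime {p : ℕ} (h : p < hitTime T z) : shiftBy p z ∉ T :=
  Nat.notMem_of_lt_sInf h

lemma hitPoint_shiftBy {a : ℕ} (hne : ∃ p, shiftBy p z ∈ T) (h : ∀ p < a, shiftBy p z ∉ T) :
    hitPoint T (shiftBy a z) = hitPoint T z := by
  have ha : a ≤ hitTime T z := not_lt.1 fun hlt => h _ hlt (Nat.sInf_mem hne)
  have := Nat.sInf_add (p := fun p => shiftBy p z ∈ T) ha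
  simp only [hitPoint, hitTime, shiftBy_shiftBy, add_comm a] at this ⊢
  rw [← this]

lemma IsSyndetic.hitTime_le {G : ℕ} (hT : IsSyndetic T G) (hz : ¬ EventuallyPeriodic z) :
    hitTime T z ≤ G := by
  obtain ⟨p, hp, hmem⟩ := hT z hz
  exact (hitTime_le_of_mem hmem).trans hp

lemma finite_setOf_hitPoint_eq [Finite α] {G : ℕ} (hT : IsSyndetic T G) (w : ℕ → α) :
    {y | ¬ EventuallyPeriodic y ∧ hitPoint T y = w}.Finite := by
  refine ((Set.finite_Iic G).biUnion fun p _ => finite_setOf_shiftBy_eq p w).subset ?_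
  rintro y ⟨hy, rfl⟩
  exact Set.mem_biUnion (hT.hitTime_le hy) rfl

variable [MeasurableSpace α]

lemma measurable_hitTime (hT : MeasurableSet T) : Measurable (hitTime T) :=
  measurable_sInf_nat fun p => measurableSet_setOfPred.1 (hT.preimage (measurable_shiftBy p))

lemma measurable_hitPoint (hT : MeasurableSet T) : Measurable (hitPoint T) :=
  Measurable.shiftBy_natIndex measurable_id (measurable_hitTime hT)

end Hitting

section Approximation

variable {α : Type*}

structure IsMarkerSequence (T : ℕ → Set (ℕ → α)) : Prop where
  antitone : Antitone T
  syndetic : ∀ n, ∃ G, IsSyndetic (T n) G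
  vanishing : ∀ z, ∃ n, z ∉ T n

namespace IsMarkerSequence

variable {T : ℕ → Set (ℕ → α)} (hT : IsMarkerSequence T) {x y z : ℕ → α}
include hT

lemma exists_hit (hz : ¬ EventuallyPeriodic z) (n : ℕ) : ∃ p, shiftBy p z ∈ T n := by
  obtain ⟨G, hG⟩ := hT.syndetic n
  obtain ⟨p, -, hp⟩ := hG z hz
  exact ⟨p, hp⟩

lemma hitPoint_hitPoint (hz : ¬ EventuallyPeriodic z) (n : ℕ) :
    hitPoint (T (n + 1)) (hitPoint (T n) z) = hitPoint (T (n + 1)) z :=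
  hitPoint_shiftBy (hT.exists_hit hz _) fun _ hp hmem =>
    notMem_of_lt_hitTime hp (hT.antitone n.le_succ hmem)

lemma hitPoint_eq_of_le (hx : ¬ EventuallyPeriodic x) (hy : ¬ EventuallyPeriodic y) {n m : ℕ}
    (hnm : n ≤ m) (h : hitPoint (T n) x = hitPoint (T n) y) :
    hitPoint (T m) x = hitPoint (T m) y := by
  induction m, hnm using Nat.le_induction with
  | base => exact h
  | succ m _ ih => rw [← hT.hitPoint_hitPoint hx, ih, hT.hitPoint_hitPoint hy]

lemma exists_hitPoint_eq (hx : ¬ EventuallyPeriodic x) (hy : ¬ EventuallyPeriodic y) {a b : ℕ}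
    (h : shiftBy a x = shiftBy b y) : ∃ n, hitPoint (T n) x = hitPoint (T n) y := by
  have hleave : ∀ z p, ∀ᶠ n in atTop, shiftBy p z ∉ T n := fun z p => by
    obtain ⟨N, hN⟩ := hT.vanishing (shiftBy p z)
    exact eventually_atTop.2 ⟨N, fun n hn hmem => hN (hT.antitone hn hmem)⟩
  obtain ⟨n, hxn, hyn⟩ := (((Set.finite_Iio a).eventually_all.2 fun p _ => hleave x p).and
    ((Set.finite_Iio b).eventually_all.2 fun p _ => hleave y p)).exists
  refine ⟨n, ?_⟩
  rw [← hitPoint_shiftBy (hT.exists_hit hx n) hxn, h, hitPoint_shiftBy (hT.exists_hit hy n) hyn]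

end IsMarkerSequence

def tailApprox (T : ℕ → Set (ℕ → α)) (n : ℕ) (x y : ℕ → α) : Prop :=
  x = y ∨ (¬ EventuallyPeriodic x ∧ ¬ EventuallyPeriodic y ∧ hitPoint (T n) x = hitPoint (T n) y) ∨
    (x ∈ periodicWithin n ∧ y ∈ periodicWithin n ∧ tailEquiv x y)

variable {T : ℕ → Set (ℕ → α)}

lemma tailApprox_equivalence (n : ℕ) : Equivalence (tailApprox T n) := by
  refine ⟨fun x => .inl rfl, ?_, ?_⟩
  · rintro x y (rfl | ⟨hx, hy, h⟩ | ⟨hx, hy, h⟩)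
    · exact .inl rfl
    · exact .inr (.inl ⟨hy, hx, h.symm⟩)
    · exact .inr (.inr ⟨hy, hx, tailEquiv_equivalence.symm h⟩)
  · rintro x y z (rfl | ⟨hx, hy, hxy⟩ | ⟨hx, hy, hxy⟩) hyz
    · exact hyz
    · rcases hyz with rfl | ⟨-, hz, hyz⟩ | ⟨hy', -, -⟩
      · exact .inr (.inl ⟨hx, hy, hxy⟩)
      · exact .inr (.inl ⟨hx, hz, hxy.trans hyz⟩)
      · exact absurd (.of_mem_periodicWithin hy') hy
    · rcases hyz with rfl | ⟨hy', -, -⟩ | ⟨-, hz, hyz⟩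
      · exact .inr (.inr ⟨hx, hy, hxy⟩)
      · exact absurd (.of_mem_periodicWithin hy) hy'
      · exact .inr (.inr ⟨hx, hz, tailEquiv_equivalence.trans hxy hyz⟩)

lemma tailApprox_succ {n : ℕ} {x y : ℕ → α} (hT : IsMarkerSequence T) (h : tailApprox T n x y) :
    tailApprox T (n + 1) x y := by
  rcases h with rfl | ⟨hx, hy, h⟩ | ⟨hx, hy, h⟩
  · exact .inl rfl
  · exact .inr (.inl ⟨hx, hy, hT.hitPoint_eq_of_le hx hy n.le_succ h⟩)
  · exact .inr (.inr ⟨periodicWithin_mono n.le_succ hx, periodicWithin_mono n.le_succ hy, h⟩)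

lemma tailEquiv_iff_exists_tailApprox (hT : IsMarkerSequence T) {x y : ℕ → α} :
    tailEquiv x y ↔ ∃ n, tailApprox T n x y := by
  constructor
  · intro h
    by_cases hx : EventuallyPeriodic x
    · obtain ⟨m, hm⟩ := hx.exists_mem_periodicWithin
      obtain ⟨k, hk⟩ := ((eventuallyPeriodic_iff_of_tailEquiv h).1 hx).exists_mem_periodicWithin
      exact ⟨max m k, .inr (.inr ⟨periodicWithin_mono (le_max_left m k) hm,
        periodicWithin_mono (le_max_right m k) hk, h⟩)⟩
    · have hy := (eventuallyPeriodic_iff_of_tailEquiv h).not.1 hx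
      obtain ⟨a, b, hab⟩ := tailEquiv_iff.1 h
      obtain ⟨n, hn⟩ := hT.exists_hitPoint_eq hx hy hab
      exact ⟨n, .inr (.inl ⟨hx, hy, hn⟩)⟩
  · rintro ⟨n, rfl | ⟨-, -, h⟩ | ⟨-, -, h⟩⟩
    · exact tailEquiv_equivalence.refl _
    · exact tailEquiv_iff.2 ⟨_, _, h⟩
    · exact h

lemma finite_setOf_tailApprox [Finite α] (hT : IsMarkerSequence T) (n : ℕ) (x : ℕ → α) :
    {y | tailApprox T n x y}.Finite := by
  obtain ⟨G, hG⟩ := hT.syndetic n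
  refine (((Set.finite_singleton x).union (finite_setOf_hitPoint_eq hG (hitPoint (T n) x))).union
    (finite_periodicWithin n)).subset ?_
  rintro y (rfl | ⟨-, hy, h⟩ | ⟨-, hy, -⟩)
  · exact .inl (.inl rfl)
  · exact .inl (.inr ⟨hy, h.symm⟩)
  · exact .inr hy

lemma measurableSet_tailApprox [Finite α] [MeasurableSpace α] [MeasurableSingletonClass α]
    (hmeas : ∀ n, MeasurableSet (T n)) (n : ℕ) :
    MeasurableSet {p : (ℕ → α) × (ℕ → α) | tailApprox T n p.1 p.2} := by
  have hper : ({p : (ℕ → α) × (ℕ → α) | p.1 ∈ periodicWithin n ∧ p.2 ∈ periodicWithin n ∧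
      tailEquiv p.1 p.2}).Finite :=
    ((finite_periodicWithin n).prod (finite_periodicWithin n)).subset fun p hp => ⟨hp.1, hp.2.1⟩
  have hhit := measurable_hitPoint (hmeas n)
  simp only [tailApprox, Set.ofPred_or]
  refine .union (measurableSet_eq_fun measurable_fst measurable_snd) (.union ?_ hper.measurableSet)
  exact measurableSet_setOfPred.2 (by fun_prop)

theorem hyperfinite_tailEquiv_of_isMarkerSequence [Finite α] [MeasurableSpace α]
    [MeasurableSingletonClass α] (hT : IsMarkerSequence T) (hmeas : ∀ n, MeasurableSet (T n)) :
    Hyperfinite (tailEquiv (α := α)) :=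
  ⟨tailApprox T, fun n => ⟨tailApprox_equivalence n, measurableSet_tailApprox hmeas n,
    finite_setOf_tailApprox hT n⟩, fun _ _ _ => tailApprox_succ hT,
    fun _ _ => tailEquiv_iff_exists_tailApprox hT⟩

end Approximation

section Selection

def IsPeak (c : ℕ → ℕ) : Prop := c 0 < c 1 ∧ c 2 ≤ c 1

noncomputable def peakDist (c : ℕ → ℕ) : ℕ := sInf {d | IsPeak (shiftBy d c)}

/-- Between two peaks the parity of `peakDist` alternates, so some index out of any three
consecutive ones is selected. -/
def Selected (c : ℕ → ℕ) : Prop := Even (peakDist c) ∧ ¬ Even (peakDist (shiftBy 1 c))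

variable {c : ℕ → ℕ}

lemma IsPeak.not_isPeak_shiftBy_one (h : IsPeak c) : ¬ IsPeak (shiftBy 1 c) :=
  fun h' => not_lt.2 h.2 h'.1

lemma Selected.not_selected_shiftBy_one (h : Selected c) : ¬ Selected (shiftBy 1 c) :=
  fun h' => h.2 h'.1

lemma peakDist_eq_zero_iff (hne : ∃ d, IsPeak (shiftBy d c)) : peakDist c = 0 ↔ IsPeak c := by
  refine ⟨fun h => ?_, fun h => Nat.sInf_eq_zero.2 (.inl (by simpa using h))⟩
  have hmem : IsPeak (shiftBy (peakDist c) c) := Nat.sInf_mem hne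
  rwa [h, shiftBy_zero] at hmem

lemma peakDist_eq_succ (hne : ∃ d, IsPeak (shiftBy d c)) (h : ¬ IsPeak c) :
    peakDist c = peakDist (shiftBy 1 c) + 1 := by
  have h1 : 1 ≤ peakDist c :=
    Nat.one_le_iff_ne_zero.2 fun h0 => h ((peakDist_eq_zero_iff hne).1 h0)
  simp only [peakDist, shiftBy_shiftBy, ← Nat.sInf_add h1, add_comm]

lemma exists_selected_of_isPeak (hne : ∀ i, ∃ d, IsPeak (shiftBy d (shiftBy i c))) {k : ℕ}
    (hk : IsPeak (shiftBy k c)) : Selected (shiftBy k c) ∨ Selected (shiftBy (k + 1) c) := by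
  have h0 := (peakDist_eq_zero_iff (hne k)).2 hk
  have h1 := peakDist_eq_succ (hne (k + 1))
    (by simpa [shiftBy_shiftBy] using hk.not_isPeak_shiftBy_one)
  simp only [Selected, shiftBy_shiftBy, h0, Even.zero, true_and, Nat.even_iff] at h1 ⊢
  omega

lemma exists_selected (hne : ∀ i, ∃ d, IsPeak (shiftBy d (shiftBy i c))) (i : ℕ) :
    ∃ j ≤ 2, Selected (shiftBy (i + j) c) := by
  by_cases hi : IsPeak (shiftBy i c)
  · rcases exists_selected_of_isPeak hne hi with h | h
    exacts [⟨0, by omega, h⟩, ⟨1, by omega, h⟩]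
  by_cases hi1 : IsPeak (shiftBy (i + 1) c)
  · rcases exists_selected_of_isPeak hne hi1 with h | h
    exacts [⟨1, by omega, h⟩, ⟨2, by omega, h⟩]
  have h0 := peakDist_eq_succ (hne i) hi
  have h1 := peakDist_eq_succ (hne (i + 1)) hi1
  have : Selected (shiftBy i c) ∨ Selected (shiftBy (i + 1) c) := by
    simp only [Selected, shiftBy_shiftBy, Nat.even_iff] at h0 h1 ⊢
    omega
  rcases this with h | h
  exacts [⟨0, by omega, h⟩, ⟨1, by omega, h⟩]

lemma exists_isPeak {N : ℕ} (hbdd : ∀ j, c j < N) (hvar : ∀ i, ∃ j, c (i + j) ≠ c i) :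
    ∃ d, IsPeak (shiftBy d c) := by
  obtain ⟨a, ha⟩ : ∃ a, c a < c (a + 1) := by
    by_contra! h
    have hanti : Antitone c := antitone_nat_of_succ_le h
    obtain ⟨a, ha⟩ : sInf (Set.range c) ∈ Set.range c := Nat.sInf_mem ⟨c 0, 0, rfl⟩
    obtain ⟨j, hj⟩ := hvar a
    exact hj (le_antisymm (hanti (Nat.le_add_right a j)) (ha ▸ Nat.sInf_le ⟨_, rfl⟩))
  have hend : ∃ t, ¬ c (a + t) < c (a + t + 1) := by
    by_contra! h
    have hgrow : ∀ t, c a + t ≤ c (a + t) := fun t => by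
      induction t with
      | zero => rfl
      | succ t ih => have := h t; rw [← add_assoc a]; omega
    have := hgrow N
    have := hbdd (a + N)
    omega
  obtain ⟨t, ht⟩ : ∃ t, Nat.find hend = t + 1 := Nat.exists_eq_succ_of_ne_zero fun h0 => by
    have := Nat.find_spec hend
    rw [h0, add_zero] at this
    exact this ha
  have hasc : c (a + t) < c (a + t + 1) := not_not.1 (Nat.find_min hend (by omega))
  have hstop := Nat.find_spec hend
  rw [ht, ← add_assoc] at hstop
  exact ⟨a + t, hasc, not_lt.1 hstop⟩

lemma measurable_selected : Measurable Selected := by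
  have hpeak : ∀ d, Measurable fun c : ℕ → ℕ => IsPeak (shiftBy d c) := fun d => by
    unfold IsPeak; fun_prop
  have hdist : Measurable peakDist := measurable_sInf_nat hpeak
  have heven : Measurable (Even : ℕ → Prop) := measurable_from_nat
  unfold Selected; fun_prop

end Selection

section BlockCode

variable {α : Type*} [Encodable α]

noncomputable def blockCode (w : ℕ → α) (L : ℕ) : ℕ :=
  Encodable.encode (List.ofFn fun k : Fin L => w k)

lemma eq_of_blockCode_eq {w w' : ℕ → α} {L L' : ℕ} (h : blockCode w L = blockCode w' L') :
    L = L' ∧ ∀ k < L, w k = w' k := by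
  have hl := Encodable.encode_injective h
  obtain rfl : L = L' := by simpa using congrArg List.length hl
  exact ⟨rfl, fun k hk => congrFun (List.ofFn_injective hl) ⟨k, hk⟩⟩

lemma exists_blockCode_lt [Finite α] (G : ℕ) :
    ∃ N, ∀ (w : ℕ → α) L, L ≤ G → blockCode w L < N := by
  obtain ⟨N, hN⟩ := ((List.finite_length_le α G).image (Encodable.encode (α := List α))).bddAbove
  exact ⟨N + 1, fun w L hL =>
    Nat.lt_succ_of_le (hN ⟨List.ofFn fun k : Fin L => w k, by simpa using hL, rfl⟩)⟩

lemma measurable_blockCode [MeasurableSpace α] [MeasurableSingletonClass α] (L : ℕ) :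
    Measurable fun w : ℕ → α => blockCode w L :=
  (measurable_of_countable fun v : Fin L → α => Encodable.encode (List.ofFn v)).comp
    (measurable_pi_lambda _ fun k => measurable_pi_apply k.val)

end BlockCode

section NextMarker

variable {α : Type*}

lemma shiftBy_eq_self_of_blocks {w : ℕ → ℕ → α} {L : ℕ}
    (hstep : ∀ j, w (j + 1) = shiftBy L (w j)) (hblock : ∀ j, ∀ k < L, w j k = w 0 k) :
    shiftBy L (w 0) = w 0 := by
  rcases Nat.eq_zero_or_pos L with rfl | hL
  · exact shiftBy_zero _
  suffices h : ∀ k j, w j (L + k) = w j k from funext fun k => h k 0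
  intro k
  induction k using Nat.strong_induction_on with
  | _ k ih =>
    intro j
    have hnext : w j (L + k) = w (j + 1) k := by rw [hstep]; rfl
    rcases lt_or_ge k L with hk | hk
    · rw [hnext, hblock _ _ hk, hblock j _ hk]
    · obtain ⟨t, rfl⟩ := Nat.exists_eq_add_of_le hk
      rw [hnext, ih t (by omega), hstep]
      rfl

noncomputable def nextGap (T : Set (ℕ → α)) (w : ℕ → α) : ℕ := hitTime T (shiftBy 1 w) + 1

noncomputable def nextMarker (T : Set (ℕ → α)) (w : ℕ → α) : ℕ → α := hitPoint T (shiftBy 1 w)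

noncomputable def codeSeq [Encodable α] (T : Set (ℕ → α)) (z : ℕ → α) : ℕ → ℕ :=
  fun j => blockCode ((nextMarker T)^[j] z) (nextGap T ((nextMarker T)^[j] z))

variable {T : Set (ℕ → α)} {G : ℕ} {w : ℕ → α}

lemma nextMarker_eq (T : Set (ℕ → α)) (w : ℕ → α) : nextMarker T w = shiftBy (nextGap T w) w := by
  simp only [nextMarker, hitPoint, nextGap, shiftBy_shiftBy, add_comm]

lemma nextGap_le_of_mem {d : ℕ} (hd : 0 < d) (h : shiftBy d w ∈ T) : nextGap T w ≤ d := by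
  obtain ⟨e, rfl⟩ := Nat.exists_eq_succ_of_ne_zero hd.ne'
  have : hitTime T (shiftBy 1 w) ≤ e := hitTime_le_of_mem (by rwa [shiftBy_shiftBy, add_comm])
  simp only [nextGap]
  omega

lemma not_eventuallyPeriodic_iterate_nextMarker (T : Set (ℕ → α)) (hw : ¬ EventuallyPeriodic w)
    (j : ℕ) : ¬ EventuallyPeriodic ((nextMarker T)^[j] w) := by
  induction j with
  | zero => exact hw
  | succ j ih => rwa [iterate_succ_apply', nextMarker_eq, eventuallyPeriodic_shiftBy_iff]

lemma codeSeq_iterate [Encodable α] (z : ℕ → α) (i : ℕ) :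
    codeSeq T ((nextMarker T)^[i] z) = shiftBy i (codeSeq T z) := by
  funext j
  simp only [codeSeq, shiftBy_apply, ← iterate_add_apply, add_comm]

namespace IsSyndetic

variable (hT : IsSyndetic T G) (hw : ¬ EventuallyPeriodic w)
include hT hw

lemma nextMarker_mem : nextMarker T w ∈ T := by
  obtain ⟨p, -, hp⟩ := hT _ ((eventuallyPeriodic_shiftBy_iff 1).not.2 hw)
  exact Nat.sInf_mem (s := {p | shiftBy p (shiftBy 1 w) ∈ T}) ⟨p, hp⟩

lemma nextGap_le : nextGap T w ≤ G + 1 :=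
  Nat.add_le_add_right (hT.hitTime_le ((eventuallyPeriodic_shiftBy_iff 1).not.2 hw)) 1

lemma iterate_nextMarker_mem (j : ℕ) : (nextMarker T)^[j + 1] w ∈ T := by
  rw [iterate_succ_apply']
  exact hT.nextMarker_mem (not_eventuallyPeriodic_iterate_nextMarker T hw j)

lemma exists_iterate_nextMarker_eq (j : ℕ) :
    ∃ p ≤ j * (G + 1), (nextMarker T)^[j] w = shiftBy p w := by
  induction j with
  | zero => exact ⟨0, Nat.zero_le _, (shiftBy_zero w).symm⟩
  | succ j ih =>
    obtain ⟨p, hp, hj⟩ := ih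
    have hgap := hT.nextGap_le (not_eventuallyPeriodic_iterate_nextMarker T hw j)
    refine ⟨p + nextGap T ((nextMarker T)^[j] w), by rw [add_mul, one_mul]; omega, ?_⟩
    rw [iterate_succ_apply', nextMarker_eq, hj, shiftBy_shiftBy]

lemma exists_isPeak_codeSeq [Finite α] [Encodable α] : ∃ d, IsPeak (shiftBy d (codeSeq T w)) := by
  have hw' := not_eventuallyPeriodic_iterate_nextMarker T hw
  obtain ⟨N, hN⟩ := exists_blockCode_lt (α := α) (G + 1)
  refine exists_isPeak (N := N) (fun j => hN _ _ (hT.nextGap_le (hw' j))) fun i => ?_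
  by_contra! hconst
  -- from the `i`-th marker on, all blocks are equal, so the sequence is periodic there
  set v : ℕ → ℕ → α := fun j => (nextMarker T)^[i + j] w
  have hcode : ∀ j, nextGap T (v j) = nextGap T (v 0) ∧ ∀ k < nextGap T (v j), v j k = v 0 k :=
    fun j => eq_of_blockCode_eq (hconst j)
  have hstep : ∀ j, v (j + 1) = shiftBy (nextGap T (v 0)) (v j) := fun j => by
    rw [← (hcode j).1]
    exact (iterate_succ_apply' _ _ _).trans (nextMarker_eq _ _)
  have hper := shiftBy_eq_self_of_blocks hstep fun j k hk => (hcode j).2 k ((hcode j).1 ▸ hk)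
  exact hw' i ⟨0, nextGap T (v 0), Nat.succ_pos _, by rw [shiftBy_zero, zero_add]; exact hper.symm⟩

lemma exists_isPeak_shiftBy_codeSeq [Finite α] [Encodable α] (i : ℕ) :
    ∃ d, IsPeak (shiftBy d (shiftBy i (codeSeq T w))) := by
  rw [← codeSeq_iterate]
  exact hT.exists_isPeak_codeSeq (not_eventuallyPeriodic_iterate_nextMarker T hw i)

end IsSyndetic

variable [MeasurableSpace α] (hT : MeasurableSet T)
include hT

lemma measurable_nextGap : Measurable (nextGap T) :=
  ((measurable_hitTime hT).comp (measurable_shiftBy 1)).add_const 1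

lemma measurable_nextMarker : Measurable (nextMarker T) :=
  (measurable_hitPoint hT).comp (measurable_shiftBy 1)

lemma measurable_codeSeq [Encodable α] [MeasurableSingletonClass α] : Measurable (codeSeq T) :=
  measurable_pi_lambda _ fun j =>
    (Measurable.comp_natIndex (F := fun L w => blockCode w L) measurable_blockCode
      (measurable_nextGap hT)).comp ((measurable_nextMarker hT).iterate j)

end NextMarker

section MarkerLevel

variable {α : Type*} [Encodable α]

noncomputable def markerLevel : ℕ → Set (ℕ → α)
  | 0 => Set.univ
  | n + 1 => {z | z ∈ markerLevel n ∧ Selected (codeSeq (markerLevel n) z)}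

lemma markerLevel_antitone : Antitone (markerLevel (α := α)) :=
  antitone_nat_of_succ_le fun _ _ hz => hz.1

lemma exists_isSyndetic_markerLevel [Finite α] (n : ℕ) :
    ∃ G, IsSyndetic (markerLevel (α := α) n) G := by
  induction n with
  | zero => exact ⟨0, fun z _ => ⟨0, le_rfl, trivial⟩⟩
  | succ n ih =>
    obtain ⟨G, hG⟩ := ih
    refine ⟨G + 2 * (G + 1), fun v hv => ?_⟩
    obtain ⟨p, hp, hw⟩ := hG v hv
    have hw' : ¬ EventuallyPeriodic (shiftBy p v) := (eventuallyPeriodic_shiftBy_iff p).not.2 hv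
    obtain ⟨j, hj, hsel⟩ := exists_selected (hG.exists_isPeak_shiftBy_codeSeq hw') 0
    rw [zero_add, ← codeSeq_iterate] at hsel
    obtain ⟨q, hq, hjq⟩ := hG.exists_iterate_nextMarker_eq hw' j
    have hmem : (nextMarker (markerLevel n))^[j] (shiftBy p v) ∈ markerLevel n := by
      rcases j with _ | j
      exacts [hw, hG.iterate_nextMarker_mem hw' j]
    refine ⟨p + q, ?_, ?_⟩
    · have := Nat.mul_le_mul_right (G + 1) hj
      omega
    · rw [← shiftBy_shiftBy, ← hjq]
      exact ⟨hmem, hsel⟩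

/-- Consecutive level-`n` markers are never both selected. -/
lemma shiftBy_notMem_markerLevel [Finite α] {n : ℕ} {z : ℕ → α} (hz : ¬ EventuallyPeriodic z)
    (hzn : z ∈ markerLevel n) {d : ℕ} (hd : 0 < d) (hdn : d < 2 ^ n) :
    shiftBy d z ∉ markerLevel n := by
  induction n generalizing z d with
  | zero => simp at hdn; omega
  | succ n ih =>
    intro hdz
    obtain ⟨G, hG⟩ := exists_isSyndetic_markerLevel (α := α) n
    set g := nextGap (markerLevel n) z
    have hnext : shiftBy g z ∈ markerLevel n := nextMarker_eq _ z ▸ hG.nextMarker_mem hz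
    have hg : 2 ^ n ≤ g := not_lt.1 fun hlt => ih hz hzn.1 (Nat.succ_pos _) hlt hnext
    rcases (nextGap_le_of_mem hd hdz.1).eq_or_lt with hdg | hlt
    · apply hzn.2.not_selected_shiftBy_one
      have := hdz.2
      rwa [← hdg, ← nextMarker_eq, ← iterate_one (nextMarker _), codeSeq_iterate] at this
    · refine ih ((eventuallyPeriodic_shiftBy_iff g).not.2 hz) hnext (d := d - g) (by omega)
        (by rw [pow_succ] at hdn; omega) ?_
      rw [shiftBy_shiftBy, Nat.add_sub_cancel' hlt.le]
      exact hdz.1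

lemma eq_zero_of_shiftBy_mem_iInter_markerLevel [Finite α] {z : ℕ → α}
    (hz : ¬ EventuallyPeriodic z) (h : z ∈ ⋂ n, markerLevel n) {d : ℕ}
    (hd : shiftBy d z ∈ ⋂ n, markerLevel n) : d = 0 := by
  by_contra hd0
  exact shiftBy_notMem_markerLevel hz (Set.mem_iInter.1 h d) (Nat.pos_of_ne_zero hd0)
    d.lt_two_pow_self (Set.mem_iInter.1 hd d)

noncomputable def markerSeq (n : ℕ) : Set (ℕ → α) := markerLevel n \ ⋂ m, markerLevel m

lemma exists_isSyndetic_markerSeq [Finite α] (n : ℕ) :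
    ∃ G, IsSyndetic (markerSeq (α := α) n) G := by
  obtain ⟨G, hG⟩ := exists_isSyndetic_markerLevel (α := α) n
  refine ⟨G + (G + 1), fun v hv => ?_⟩
  obtain ⟨p, hp, hw⟩ := hG v hv
  have hw' : ¬ EventuallyPeriodic (shiftBy p v) := (eventuallyPeriodic_shiftBy_iff p).not.2 hv
  by_cases hfrozen : shiftBy p v ∈ ⋂ m, markerLevel m
  · -- the next level-`n` marker cannot lie on every level as well
    refine ⟨p + nextGap (markerLevel n) (shiftBy p v), by linarith [hG.nextGap_le hw'], ?_⟩
    rw [← shiftBy_shiftBy, ← nextMarker_eq]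
    refine ⟨hG.nextMarker_mem hw', fun h => ?_⟩
    rw [nextMarker_eq] at h
    exact Nat.succ_ne_zero _ (eq_zero_of_shiftBy_mem_iInter_markerLevel hw' hfrozen h)
  · exact ⟨p, by omega, hw, hfrozen⟩

lemma isMarkerSequence_markerSeq [Finite α] : IsMarkerSequence (markerSeq (α := α)) := by
  refine ⟨fun m n h => Set.sdiff_subset_sdiff_left (markerLevel_antitone h),
    exists_isSyndetic_markerSeq, fun z => ?_⟩
  by_cases hz : z ∈ ⋂ m, markerLevel m
  · exact ⟨0, fun h => h.2 hz⟩
  · obtain ⟨n, hn⟩ := not_forall.1 (Set.mem_iInter.not.1 hz)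
    exact ⟨n, fun h => hn h.1⟩

variable [MeasurableSpace α] [MeasurableSingletonClass α]

lemma measurableSet_markerLevel (n : ℕ) : MeasurableSet (markerLevel (α := α) n) := by
  induction n with
  | zero => exact .univ
  | succ n ih =>
    exact ih.inter
      ((measurableSet_setOfPred.2 measurable_selected).preimage (measurable_codeSeq ih))

theorem hyperfinite_tailEquiv [Finite α] : Hyperfinite (tailEquiv (α := α)) :=
  hyperfinite_tailEquiv_of_isMarkerSequence isMarkerSequence_markerSeq fun n =>
    (measurableSet_markerLevel n).diff (.iInter measurableSet_markerLevel)

end MarkerLevel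

end BA

open BA in
/-- For a countable set `S`, tail equivalence on `S^ℕ` is a
hyperfinite Borel equivalence relation. -/
theorem stmt13 {S : Type*} [Countable S] [MeasurableSpace S]
    [DiscreteMeasurableSpace S] :
    Equivalence (tailEquiv (α := S)) ∧
    MeasurableSet {p : (ℕ → S) × (ℕ → S) | tailEquiv p.1 p.2} ∧
    Hyperfinite (tailEquiv (α := S)) := by
  obtain ⟨e, he⟩ := Countable.exists_injective_nat S
  exact ⟨tailEquiv_equivalence, measurableSet_tailEquiv,
    hyperfinite_tailEquiv.comap measurable_unaryCode (unaryCode_injective he)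
      fun _ _ => (tailEquiv_unaryCode_iff he).symm⟩
end

section
/- Let S be a finite set and let s : S^ℕ → S^ℕ be the left shift, with induced graph metric ρ_s. Then the Borel extended metric space (S^ℕ, ρ_s) has Borel asymptotic dimension at most 1: for every r > 0 there exists a uniformly bounded Borel equivalence relation E on S^ℕ such that every ρ_s-ball of radius r meets at most 2 classes of E. -/
/-!
Put `R = ⌈r⌉₊` and `n = 2R + 1`. Everything rests on a Borel set `M` of markers that every forward
orbit meets within bounded time and in which no two distinct points lie at forward distance `< n`.
Let `E u v` say that the first marker on the orbit of `u` after time `R` is that of `v`; classes are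
uniformly bounded. The points of the `r`-ball around `x` are sent to the first markers after times
`t ∈ [0, 2R]` on the orbit of `x`, and by separation there are at most two of these.

Markers are the points whose first return to a set `A` of landmarks happens at a positive multiple
of `n`, together with the landmarks on cycles shorter than `n`. On orbits that are not eventually
periodic the landmarks are anchors: points whose code of the window of length `n! + n` is smaller
than the codes at the next `n - 1` positions. Codes increase along landmarks closer than `n`, so a
gap of length `≥ n`, and hence a marker, occurs within bounded time. On the countably many
eventually periodic points, the landmarks are one chosen point on each cycle.
-/

namespace BA

open Function
open scoped Nat

section Markers

variable {α : Type*} (f : α → α)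

def IsFirstHit (A : Set α) (x : α) (t : ℕ) : Prop :=
  0 < t ∧ f^[t] x ∈ A ∧ ∀ u, 0 < u → u < t → f^[u] x ∉ A

def IsSeparated (M : Set α) (n : ℕ) : Prop :=
  ∀ x ∈ M, ∀ d, 0 < d → d < n → f^[d] x ∈ M → f^[d] x = x

def markerSet (A : Set α) (n : ℕ) : Set α :=
  {x | ∃ q, 0 < q ∧ IsFirstHit f A x (q * n)} ∪ {x ∈ A | ∃ d, 0 < d ∧ d < n ∧ f^[d] x = x}

variable {f} {A M : Set α} {x : α}

theorem IsFirstHit.eq {t t' : ℕ} (h : IsFirstHit f A x t) (h' : IsFirstHit f A x t') :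
    t = t' := by
  by_contra hne
  rcases Nat.lt_or_gt_of_ne hne with hlt | hlt
  · exact h'.2.2 t h.1 hlt h.2.1
  · exact h.2.2 t' h'.1 hlt h'.2.1

theorem IsFirstHit.iterate {t d : ℕ} (h : IsFirstHit f A x t) (hd : d < t) :
    IsFirstHit f A (f^[d] x) (t - d) := by
  refine ⟨by omega, ?_, fun u hu hut => ?_⟩
  · rw [← iterate_add_apply, Nat.sub_add_cancel hd.le]
    exact h.2.1
  · rw [← iterate_add_apply]
    exact h.2.2 (u + d) (by omega) (by omega)

theorem exists_isFirstHit (h : ∃ t, 0 < t ∧ f^[t] x ∈ A) : ∃ t, IsFirstHit f A x t := by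
  classical
  refine ⟨Nat.find h, (Nat.find_spec h).1, (Nat.find_spec h).2, fun u hu hut hA => ?_⟩
  exact Nat.find_min h hut ⟨hu, hA⟩

theorem _root_.Function.IsPeriodicPt.exists_iterate_iterate_eq {p : ℕ}
    (hx : IsPeriodicPt f p x) (hp : 0 < p) (d : ℕ) : ∃ e, 0 < e ∧ e ≤ p ∧ f^[e] (f^[d] x) = x := by
  refine ⟨p - d % p, by have := Nat.mod_lt d hp; omega, Nat.sub_le _ _, ?_⟩
  have hsum : p - d % p + d = (d / p + 1) * p := by
    have := Nat.mod_add_div d p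
    have := Nat.mod_lt d hp
    rw [Nat.add_mul, one_mul, Nat.mul_comm]
    omega
  rw [← iterate_add_apply, hsum]
  exact (hx.const_mul _).eq

theorem isSeparated_markerSet {n : ℕ} {c : α → ℕ}
    (hA : ∀ x ∈ A, ∀ d, 0 < d → d < n → f^[d] x ∈ A → c x < c (f^[d] x) ∨ f^[d] x = x) :
    IsSeparated f (markerSet f A n) n := by
  rintro x (⟨q, hq, hx⟩ | ⟨hxA, p, hp, hpn, hxp⟩) d hd hdn (⟨q', hq', hy⟩ | ⟨hyA, -⟩)
  · have hdq : d < q * n := lt_of_lt_of_le hdn (Nat.le_mul_of_pos_left n hq)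
    have heq : q * n = d + q' * n := by have := (hx.iterate hdq).eq hy; omega
    have hmod := congrArg (· % n) heq
    simp only [Nat.mul_mod_left, Nat.add_mul_mod_self_right, Nat.mod_eq_of_lt hdn] at hmod
    omega
  · exact absurd hyA (hx.2.2 d hd (lt_of_lt_of_le hdn (Nat.le_mul_of_pos_left n hq)))
  · obtain ⟨e, he, hep, hex⟩ := IsPeriodicPt.exists_iterate_iterate_eq hxp hp d
    exact (hy.2.2 e he ((by omega : e < n).trans_le (Nat.le_mul_of_pos_left n hq'))
      (by rwa [hex])).elim
  · obtain ⟨e, he, hep, hex⟩ := IsPeriodicPt.exists_iterate_iterate_eq hxp hp d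
    rcases hA x hxA d hd hdn hyA with hlt | heq
    · rcases hA _ hyA e he (by omega) (by rwa [hex]) with hlt' | heq'
      · rw [hex] at hlt'; omega
      · rw [hex] at heq'; exact heq'.symm
    · exact heq

theorem IsFirstHit.iterate_mod_mem_markerSet {t n : ℕ}
    (h : IsFirstHit f A x t) (hn : 0 < n) (hnt : n ≤ t) : f^[t % n] x ∈ markerSet f A n := by
  refine Or.inl ⟨t / n, Nat.div_pos hnt hn, ?_⟩
  have := h.iterate ((Nat.mod_lt t hn).trans_le hnt)
  rwa [show t - t % n = t / n * n by have := Nat.mod_add_div' t n; omega] at this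

theorem exists_iterate_mem_markerSet {n N : ℕ} {c : α → ℕ} (hn : 0 < n)
    (hc : ∀ x, c x < N) (hit : ∀ x, ∃ t, 0 < t ∧ f^[t] x ∈ A)
    (hA : ∀ x ∈ A, ∀ d, 0 < d → d < n → f^[d] x ∈ A → c x < c (f^[d] x) ∨ f^[d] x = x)
    (x : α) : ∃ t < n * (N + 2), f^[t] x ∈ markerSet f A n := by
  have hlandmark : ∀ m, ∀ y ∈ A, N - c y ≤ m → ∃ t < n * (m + 1), f^[t] y ∈ markerSet f A n := by
    intro m
    induction m with
    | zero => intro y _ hy; have := hc y; omega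
    | succ m ih =>
      intro y hy hym
      obtain ⟨D, hD⟩ := exists_isFirstHit (hit y)
      by_cases hDn : n ≤ D
      · exact ⟨D % n, (Nat.mod_lt D hn).trans_le (Nat.le_mul_of_pos_right n (by omega)),
          hD.iterate_mod_mem_markerSet hn hDn⟩
      rcases hA y hy D hD.1 (by omega) hD.2.1 with hlt | hfix
      · obtain ⟨t, ht, hmem⟩ := ih _ hD.2.1 (by have := hc (f^[D] y); omega)
        refine ⟨t + D, by rw [Nat.mul_succ]; omega, ?_⟩
        rwa [iterate_add_apply]
      · exact ⟨0, by positivity, Or.inr ⟨hy, D, hD.1, by omega, hfix⟩⟩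
  obtain ⟨D, hD⟩ := exists_isFirstHit (hit x)
  by_cases hDn : n ≤ D
  · exact ⟨D % n, (Nat.mod_lt D hn).trans_le (Nat.le_mul_of_pos_right n (by omega)),
      hD.iterate_mod_mem_markerSet hn hDn⟩
  obtain ⟨t, ht, hmem⟩ := hlandmark N _ hD.2.1 (Nat.sub_le _ _)
  refine ⟨t + D, by rw [Nat.mul_succ]; omega, ?_⟩
  rwa [iterate_add_apply]

variable (f) in
noncomputable def entryTime (M : Set α) (x : α) : ℕ := sInf {t | f^[t] x ∈ M}

variable (f) in
noncomputable def entryPt (M : Set α) (x : α) : α := f^[entryTime f M x] x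

theorem entryPt_mem (hM : ∀ x, ∃ t, f^[t] x ∈ M) (x : α) : entryPt f M x ∈ M :=
  Nat.sInf_mem (hM x)

theorem entryTime_le {t : ℕ} (h : f^[t] x ∈ M) : entryTime f M x ≤ t :=
  Nat.sInf_le h

theorem entryPt_eq_or_eq {n : ℕ} (hsep : IsSeparated f M n)
    (hM : ∀ x, ∃ t, f^[t] x ∈ M) (x : α) {t t' : ℕ} (htt' : t ≤ t') (ht' : t' < n) :
    entryPt f M x = entryPt f M (f^[t] x) ∨ entryPt f M (f^[t] x) = entryPt f M (f^[t'] x) := by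
  -- `τ s` is the first time `≥ s` at which the orbit of `x` visits `M`
  set τ : ℕ → ℕ := fun s => entryTime f M (f^[s] x) + s
  have hτ : ∀ s, entryPt f M (f^[s] x) = f^[τ s] x := fun s => (iterate_add_apply ..).symm
  have hτ_mem : ∀ s, f^[τ s] x ∈ M := fun s => hτ s ▸ entryPt_mem hM _
  have hτ_le : ∀ s u, s ≤ u → f^[u] x ∈ M → τ s ≤ u := fun s u hsu hu => by
    show entryTime f M (f^[s] x) + s ≤ u
    have : entryTime f M (f^[s] x) ≤ u - s :=
      entryTime_le (by rwa [← iterate_add_apply, Nat.sub_add_cancel hsu])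
    omega
  have hτ0 : entryPt f M x = f^[τ 0] x := hτ 0
  rw [hτ0, hτ t, hτ t']
  by_cases h0 : f^[τ 0] x = f^[τ t] x
  · exact Or.inl h0
  have h0t : τ 0 < τ t :=
    lt_of_le_of_ne (hτ_le 0 _ (Nat.zero_le _) (hτ_mem t)) fun h => h0 (congrArg (f^[·] x) h)
  have hgap : n ≤ τ t - τ 0 := by
    by_contra hlt
    have hiter : f^[τ t - τ 0] (f^[τ 0] x) = f^[τ t] x := by
      rw [← iterate_add_apply, Nat.sub_add_cancel h0t.le]
    exact h0 (hiter ▸ hsep _ (hτ_mem 0) _ (by omega) (by omega) (hiter ▸ hτ_mem t)).symm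
  refine Or.inr (congrArg (f^[·] x) (le_antisymm ?_ ?_))
  · exact hτ_le t _ (htt'.trans (Nat.le_add_left _ _)) (hτ_mem t')
  · exact hτ_le t' _ (by omega) (hτ_mem t)

section Measurability

variable [MeasurableSpace α]

theorem measurableSet_isFirstHit (hf : Measurable f) (hA : MeasurableSet A) (t : ℕ) :
    MeasurableSet {x | IsFirstHit f A x t} := by
  have hmem : ∀ u, Measurable fun x => f^[u] x ∈ A := fun u =>
    measurableSet_setOfPred.mp (hf.iterate u hA)
  exact measurableSet_setOfPred.mpr <| measurable_const.and <| (hmem t).and <|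
    Measurable.forall fun u => measurable_const.imp <| measurable_const.imp (hmem u).not

theorem measurableSet_markerSet [MeasurableEq α] (hf : Measurable f) (hA : MeasurableSet A)
    (n : ℕ) : MeasurableSet (markerSet f A n) := by
  refine .union (measurableSet_setOfPred.mpr <| Measurable.exists fun q => measurable_const.and <|
    measurableSet_setOfPred.mp (measurableSet_isFirstHit hf hA _)) (hA.inter ?_)
  exact measurableSet_setOfPred.mpr <| Measurable.exists fun d => measurable_const.and <|
    measurable_const.and <|
      measurableSet_setOfPred.mp (measurableSet_eq_fun (hf.iterate d) measurable_id)

theorem measurable_entryPt (hf : Measurable f) (hM : MeasurableSet M)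
    (hit : ∀ x, ∃ t, f^[t] x ∈ M) : Measurable (entryPt f M) := by
  classical
  have : entryPt f M = fun x => f^[Nat.find (hit x)] x := funext fun x => by
    unfold entryPt entryTime
    congr 1
    convert Nat.sInf_def (hit x)
    rfl
  rw [this]
  exact Measurable.find (fun t => hf.iterate t) (fun t => hf.iterate t hM) hit

end Measurability

end Markers

section Periodic

variable {α : Type*} (f : α → α)

def eventuallyPeriodicPts : Set α := {x | ∃ e, f^[e] x ∈ periodicPts f}

noncomputable def cycleRep (x : α) : α := @Classical.epsilon α ⟨x⟩ fun y => ∃ j, f^[j] x = y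

def cycleReps : Set α := {x ∈ periodicPts f | cycleRep f x = x}

variable {f} {x : α}

theorem iterate_mem_eventuallyPeriodicPts_iff {t : ℕ} :
    f^[t] x ∈ eventuallyPeriodicPts f ↔ x ∈ eventuallyPeriodicPts f := by
  constructor
  · rintro ⟨e, he⟩
    exact ⟨e + t, by rwa [iterate_add_apply]⟩
  · rintro ⟨e, p, hp, he⟩
    refine ⟨e, p, hp, ?_⟩
    rw [← iterate_add_apply, Nat.add_comm, iterate_add_apply]
    exact he.apply_iterate t

theorem cycleRep_iterate (hx : x ∈ periodicPts f) (s : ℕ) :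
    cycleRep f (f^[s] x) = cycleRep f x := by
  obtain ⟨p, hp, hxp⟩ := hx
  obtain ⟨e, -, -, he⟩ := hxp.exists_iterate_iterate_eq hp s
  unfold cycleRep
  congr 1
  funext y
  refine propext ⟨?_, ?_⟩
  · rintro ⟨j, rfl⟩
    exact ⟨j + s, iterate_add_apply ..⟩
  · rintro ⟨j, rfl⟩
    exact ⟨j + e, by rw [iterate_add_apply, he]⟩

theorem exists_iterate_eq_cycleRep (x : α) : ∃ j, f^[j] x = cycleRep f x :=
  Classical.epsilon_spec (p := fun y => ∃ j, f^[j] x = y) ⟨x, 0, rfl⟩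

theorem exists_pos_iterate_mem_cycleReps (hx : x ∈ eventuallyPeriodicPts f) :
    ∃ t, 0 < t ∧ f^[t] x ∈ cycleReps f := by
  obtain ⟨e, hper⟩ := hx
  obtain ⟨j, hj⟩ := exists_iterate_eq_cycleRep (f^[e] x)
  obtain ⟨p, hp, hxp⟩ := hper
  have hb : IsPeriodicPt f p (cycleRep f (f^[e] x)) := hj ▸ hxp.apply_iterate j
  refine ⟨p + (j + e), by omega, ?_⟩
  rw [iterate_add_apply, iterate_add_apply, hj, hb.eq]
  refine ⟨⟨p, hp, hb⟩, ?_⟩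
  conv_lhs => rw [← hj]
  exact cycleRep_iterate ⟨p, hp, hxp⟩ j

theorem iterate_eq_of_mem_cycleReps {d : ℕ} (hx : x ∈ cycleReps f)
    (hd : f^[d] x ∈ cycleReps f) : f^[d] x = x := by
  rw [← hd.2, cycleRep_iterate hx.1, hx.2]

theorem cycleReps_subset_eventuallyPeriodicPts : cycleReps f ⊆ eventuallyPeriodicPts f :=
  fun _ hx => ⟨0, hx.1⟩

end Periodic

section FunctionGraph

open SimpleGraph

variable {α : Type*} {f : α → α}

theorem exists_iterate_eq_of_walk {x y : α} (w : (fromRel fun a b => f a = b).Walk x y) :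
    ∃ a b, a + b ≤ w.length ∧ f^[a] x = f^[b] y := by
  induction w with
  | nil => exact ⟨0, 0, le_rfl, rfl⟩
  | @cons x v y hadj p ih =>
    obtain ⟨a, b, hab, he⟩ := ih
    rw [Walk.length_cons]
    rcases (fromRel_adj _ _ _).mp hadj |>.2 with hxv | hvx
    · exact ⟨a + 1, b, by omega, by rwa [iterate_succ_apply, hxv]⟩
    · rcases a with _ | a
      · exact ⟨0, b + 1, by omega, by rw [iterate_succ_apply', ← he, ← hvx]; rfl⟩
      · exact ⟨a, b, by omega, by rwa [← hvx, ← iterate_succ_apply]⟩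

theorem exists_walk_iterate (x : α) (t : ℕ) :
    ∃ w : (fromRel fun a b => f a = b).Walk x (f^[t] x), w.length ≤ t := by
  induction t with
  | zero => exact ⟨.nil, le_rfl⟩
  | succ t ih =>
    obtain ⟨w, hw⟩ := ih
    rw [iterate_succ_apply']
    by_cases hfix : f^[t] x = f (f^[t] x)
    · exact ⟨w.copy rfl hfix, by rw [Walk.length_copy]; omega⟩
    · have hadj : (fromRel fun a b => f a = b).Adj (f^[t] x) (f (f^[t] x)) :=
        (fromRel_adj _ _ _).mpr ⟨hfix, Or.inl rfl⟩
      exact ⟨w.concat hadj, by rw [Walk.length_concat]; omega⟩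

theorem exists_walk_of_iterate_eq {x y : α} {a b : ℕ} (h : f^[a] x = f^[b] y) :
    ∃ w : (fromRel fun a b => f a = b).Walk x y, w.length ≤ a + b := by
  obtain ⟨wx, hwx⟩ := exists_walk_iterate (f := f) x a
  obtain ⟨wy, hwy⟩ := exists_walk_iterate (f := f) y b
  exact ⟨wx.append (wy.reverse.copy h.symm rfl), by
    rw [Walk.length_append, Walk.length_copy, Walk.length_reverse]; omega⟩

end FunctionGraph

section Shift

variable {S : Type*}

theorem shift_iterate_apply (t : ℕ) (z : ℕ → S) (i : ℕ) : shift^[t] z i = z (i + t) := by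
  induction t generalizing z with
  | zero => rfl
  | succ t ih => rw [iterate_succ_apply, ih]; rfl

theorem shift_surjective : Surjective (shift : (ℕ → S) → (ℕ → S)) :=
  fun y => ⟨fun i => Nat.casesOn (motive := fun _ => S) i (y 0) y, rfl⟩

theorem measurable_shift [MeasurableSpace S] : Measurable (shift : (ℕ → S) → (ℕ → S)) :=
  measurable_pi_lambda _ fun i => measurable_pi_apply (i + 1)

theorem shiftDistLe_of_iterate_eq {x y : ℕ → S} {a b : ℕ} {K : ℝ} (h : shift^[a] x = shift^[b] y)
    (hK : ((a + b : ℕ) : ℝ) ≤ K) : shiftDistLe x y K := by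
  obtain ⟨w, hw⟩ := exists_walk_of_iterate_eq h
  exact ⟨w, le_trans (by exact_mod_cast hw) hK⟩

theorem exists_iterate_eq_of_shiftDistLe {x y : ℕ → S} {r : ℝ} (h : shiftDistLe x y r) :
    ∃ t ≤ 2 * ⌈r⌉₊, shift^[⌈r⌉₊] y = shift^[t] x := by
  obtain ⟨w, hw⟩ := h
  obtain ⟨a, b, hab, he⟩ := exists_iterate_eq_of_walk w
  have hR : a + b ≤ ⌈r⌉₊ := hab.trans (by exact_mod_cast hw.trans (Nat.le_ceil r))
  refine ⟨⌈r⌉₊ - b + a, by omega, ?_⟩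
  calc shift^[⌈r⌉₊] y = shift^[⌈r⌉₊ - b] (shift^[b] y) := by
        rw [← iterate_add_apply, Nat.sub_add_cancel (by omega)]
    _ = shift^[⌈r⌉₊ - b + a] x := by rw [← he, ← iterate_add_apply]

theorem countable_eventuallyPeriodicPts_shift [Finite S] :
    (eventuallyPeriodicPts (shift : (ℕ → S) → (ℕ → S))).Countable := by
  have hsub : eventuallyPeriodicPts (shift : (ℕ → S) → (ℕ → S)) ⊆
      ⋃ (e : ℕ) (p : ℕ), {x | 0 < p ∧ IsPeriodicPt shift p (shift^[e] x)} := by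
    rintro x ⟨e, p, hp, hx⟩
    exact Set.mem_iUnion₂.mpr ⟨e, p, hp, hx⟩
  refine .mono hsub <| Set.countable_iUnion fun e => Set.countable_iUnion fun p =>
    Set.Finite.countable ?_
  -- such a point is determined by its first `e + p` coordinates
  refine Set.Finite.of_finite_image (f := fun x (i : Fin (e + p)) => x i) (Set.toFinite _) ?_
  rintro x ⟨hp, hx⟩ y ⟨-, hy⟩ hxy
  have hback : ∀ z : ℕ → S, IsPeriodicPt shift p (shift^[e] z) →
      ∀ i, e + p ≤ i → z i = z (i - p) :=
    fun z hz i hi => by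
      have := congrFun hz.eq (i - p - e)
      rwa [shift_iterate_apply, shift_iterate_apply, shift_iterate_apply,
        show i - p - e + p + e = i by omega, show i - p - e + e = i - p by omega] at this
  funext i
  induction i using Nat.strong_induction_on with
  | _ i ih =>
    by_cases hi : i < e + p
    · exact congrFun hxy ⟨i, hi⟩
    · rw [hback x hx i (by omega), hback y hy i (by omega), ih _ (by omega)]

variable [Finite S]

noncomputable def windowCode (k : ℕ) (z : ℕ → S) : ℕ := Finite.equivFin (Fin k → S) fun i => z i

theorem windowCode_lt {k : ℕ} {z : ℕ → S} : windowCode k z < Nat.card (Fin k → S) := Fin.isLt _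

theorem apply_eq_of_windowCode_eq {k : ℕ} {z z' : ℕ → S} (h : windowCode k z = windowCode k z')
    {i : ℕ} (hi : i < k) : z i = z' i :=
  congrFun ((Finite.equivFin _).injective (Fin.ext h)) ⟨i, hi⟩

theorem measurable_windowCode [MeasurableSpace S] [DiscreteMeasurableSpace S] (k : ℕ) :
    Measurable (windowCode k : (ℕ → S) → ℕ) :=
  (measurable_of_countable fun w : Fin k → S => (Finite.equivFin _ w : ℕ)).comp
    (measurable_pi_lambda _ fun i => measurable_pi_apply (i : ℕ))

def anchors (n k : ℕ) : Set (ℕ → S) :=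
  {z | ∀ d, 0 < d → d < n → windowCode k z < windowCode k (shift^[d] z)}

theorem measurableSet_anchors [MeasurableSpace S] [DiscreteMeasurableSpace S] (n k : ℕ) :
    MeasurableSet (anchors n k : Set (ℕ → S)) :=
  measurableSet_setOfPred.mpr <| Measurable.forall fun d => measurable_const.imp <|
    measurable_const.imp <| measurableSet_setOfPred.mp <|
      measurableSet_lt (measurable_windowCode k)
        ((measurable_windowCode k).comp (measurable_shift.iterate d))

theorem apply_add_factorial_eq_of_windowCode_eq {n k t t' : ℕ} {z : ℕ → S} (hk : n ! + n ≤ k)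
    (htt' : t < t') (ht' : t' ≤ t + n)
    (h : windowCode k (shift^[t] z) = windowCode k (shift^[t'] z)) {y : ℕ} (hty : t ≤ y)
    (hy : y ≤ t + n) : z (y + n !) = z y := by
  set d := t' - t
  have hstep : ∀ u, t ≤ u → u < t + k → z (u + d) = z u := fun u h1 h2 => by
    have := apply_eq_of_windowCode_eq h (i := u - t) (by omega)
    rwa [shift_iterate_apply, shift_iterate_apply, show u - t + t = u by omega,
      show u - t + t' = u + d by omega, eq_comm] at this
  have hiter : ∀ m, d * m ≤ n ! → z (y + d * m) = z y := by
    intro m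
    induction m with
    | zero => simp
    | succ m ih =>
      intro hm
      rw [Nat.mul_succ] at hm ⊢
      rw [← Nat.add_assoc, hstep _ (by omega) (by omega), ih (by omega)]
  obtain ⟨c, hc⟩ := Nat.dvd_factorial (show 0 < d by omega) (show d ≤ n by omega)
  rw [hc]
  exact hiter c hc.ge

/-- If no point of the orbit is an anchor, the positions where the window code is minimal recur
with gaps `< n`, which forces the orbit to be eventually periodic. -/
theorem exists_iterate_mem_anchors {n k : ℕ} (hn : 0 < n) (hk : n ! + n ≤ k) {z : ℕ → S}
    (hz : z ∉ eventuallyPeriodicPts shift) : ∃ t, shift^[t] z ∈ anchors n k := by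
  by_contra! hnone
  set c : ℕ → ℕ := fun t => windowCode k (shift^[t] z)
  set t₀ := argmin c
  have hnext : ∀ t, c t = c t₀ → ∃ t', t < t' ∧ t' < t + n ∧ c t' = c t₀ := by
    intro t ht
    obtain ⟨d, hd, hdn, hle⟩ : ∃ d, 0 < d ∧ d < n ∧ c (t + d) ≤ c t := by
      simpa [anchors, c, Nat.add_comm t, iterate_add_apply] using hnone t
    exact ⟨t + d, by omega, by omega, le_antisymm (ht ▸ hle) (argmin_le c _)⟩
  have hcover : ∀ j, ∃ t, c t = c t₀ ∧ t ≤ t₀ + j ∧ t₀ + j < t + n := by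
    intro j
    induction j with
    | zero => exact ⟨t₀, rfl, le_rfl, by omega⟩
    | succ j ih =>
      obtain ⟨t, ht, htj, hjt⟩ := ih
      by_cases hj : t₀ + (j + 1) < t + n
      · exact ⟨t, ht, by omega, hj⟩
      · obtain ⟨t', htt', ht'n, ht'⟩ := hnext t ht
        exact ⟨t', ht', by omega, by omega⟩
  refine hz ⟨t₀, n !, n.factorial_pos, funext fun i => ?_⟩
  obtain ⟨t, ht, hti, hit⟩ := hcover i
  obtain ⟨t', htt', ht'n, ht'⟩ := hnext t ht
  rw [shift_iterate_apply, shift_iterate_apply, shift_iterate_apply, Nat.add_right_comm]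
  exact apply_add_factorial_eq_of_windowCode_eq hk htt' ht'n.le (ht.trans ht'.symm)
    (by omega) (by omega)

def landmarks (n k : ℕ) : Set (ℕ → S) :=
  anchors n k \ eventuallyPeriodicPts shift ∪ cycleReps shift

theorem exists_pos_iterate_mem_landmarks {n k : ℕ} (hn : 0 < n) (hk : n ! + n ≤ k) (z : ℕ → S) :
    ∃ t, 0 < t ∧ shift^[t] z ∈ landmarks n k := by
  by_cases hz : z ∈ eventuallyPeriodicPts shift
  · obtain ⟨t, ht, hmem⟩ := exists_pos_iterate_mem_cycleReps hz
    exact ⟨t, ht, Or.inr hmem⟩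
  · obtain ⟨t, ht⟩ := exists_iterate_mem_anchors hn hk
      (mt iterate_mem_eventuallyPeriodicPts_iff.mp hz : shift^[1] z ∉ _)
    refine ⟨t + 1, by omega, Or.inl ⟨by rwa [iterate_add_apply], ?_⟩⟩
    rwa [iterate_mem_eventuallyPeriodicPts_iff]

theorem windowCode_lt_or_eq_of_mem_landmarks {n k : ℕ} :
    ∀ x ∈ (landmarks n k : Set (ℕ → S)), ∀ d, 0 < d → d < n → shift^[d] x ∈ landmarks n k →
      windowCode k x < windowCode k (shift^[d] x) ∨ shift^[d] x = x := by
  rintro x (⟨hx, -⟩ | hx) d hd hdn hdx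
  · exact Or.inl (hx d hd hdn)
  · refine Or.inr (iterate_eq_of_mem_cycleReps hx ?_)
    rcases hdx with ⟨-, hnot⟩ | h
    · exact absurd (iterate_mem_eventuallyPeriodicPts_iff.mpr
        (cycleReps_subset_eventuallyPeriodicPts hx)) hnot
    · exact h

theorem measurableSet_landmarks [MeasurableSpace S] [DiscreteMeasurableSpace S] (n k : ℕ) :
    MeasurableSet (landmarks n k : Set (ℕ → S)) :=
  ((measurableSet_anchors n k).diff countable_eventuallyPeriodicPts_shift.measurableSet).union
    (countable_eventuallyPeriodicPts_shift.mono
      cycleReps_subset_eventuallyPeriodicPts).measurableSet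

theorem exists_shift_markers [MeasurableSpace S] [DiscreteMeasurableSpace S] {n : ℕ} (hn : 0 < n) :
    ∃ M : Set (ℕ → S), MeasurableSet M ∧ IsSeparated shift M n ∧
      ∃ C, ∀ x, ∃ t < C, shift^[t] x ∈ M :=
  ⟨markerSet shift (landmarks n (n ! + n)) n,
    measurableSet_markerSet measurable_shift (measurableSet_landmarks n _) n,
    isSeparated_markerSet windowCode_lt_or_eq_of_mem_landmarks, _,
    exists_iterate_mem_markerSet hn (fun _ => windowCode_lt)
      (exists_pos_iterate_mem_landmarks hn le_rfl) windowCode_lt_or_eq_of_mem_landmarks⟩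

end Shift

end BA

open BA in
theorem stmt14_general {S : Type*} [Finite S] [MeasurableSpace S]
    [DiscreteMeasurableSpace S] (r : ℝ) :
    ∃ E : (ℕ → S) → (ℕ → S) → Prop,
      Equivalence E ∧ MeasurableSet {p : (ℕ → S) × (ℕ → S) | E p.1 p.2} ∧
      (∃ K : ℝ, ∀ x y, E x y → shiftDistLe x y K) ∧
      ∀ x : ℕ → S, ∃ a b : ℕ → S, ∀ y : ℕ → S,
        shiftDistLe x y r → E y a ∨ E y b := by
  set R := ⌈r⌉₊
  obtain ⟨M, hM_meas, hM_sep, C, hM_ret⟩ :=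
    exists_shift_markers (S := S) (n := 2 * R + 1) (by omega)
  have hM : ∀ x, ∃ t, shift^[t] x ∈ M := fun x => (hM_ret x).imp fun _ => And.right
  set φ : (ℕ → S) → (ℕ → S) := fun u => entryPt shift M (shift^[R] u)
  have hφ : Measurable φ :=
    (measurable_entryPt measurable_shift hM_meas hM).comp (measurable_shift.iterate R)
  have hφ_iter : ∀ u, ∃ a ≤ R + C, φ u = shift^[a] u := fun u => by
    obtain ⟨t, ht, hmem⟩ := hM_ret (shift^[R] u)
    exact ⟨_, by have := entryTime_le hmem; omega, (Function.iterate_add_apply ..).symm⟩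
  refine ⟨fun u v => φ u = φ v, ⟨fun _ => rfl, Eq.symm, Eq.trans⟩,
    measurableSet_eq_fun (hφ.comp measurable_fst) (hφ.comp measurable_snd),
    ⟨(2 * (R + C) : ℕ), fun u v huv => ?_⟩, fun x => ?_⟩
  · obtain ⟨a, ha, hau⟩ := hφ_iter u
    obtain ⟨b, hb, hbv⟩ := hφ_iter v
    exact shiftDistLe_of_iterate_eq (hau.symm.trans (huv.trans hbv)) (by gcongr; omega)
  · obtain ⟨a, ha⟩ := (shift_surjective.iterate R) x
    obtain ⟨b, hb⟩ := (shift_surjective.iterate R) (shift^[2 * R] x)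
    refine ⟨a, b, fun y hy => ?_⟩
    obtain ⟨t, ht, hyt⟩ : ∃ t ≤ 2 * R, shift^[R] y = shift^[t] x :=
      exists_iterate_eq_of_shiftDistLe hy
    simp only [φ, ha, hb, hyt]
    exact (entryPt_eq_or_eq hM_sep hM x ht (by omega)).imp_left Eq.symm

open BA in
/-- `(S^ℕ, ρ_s)` has Borel asymptotic dimension at most 1: for
every `r > 0` there is a uniformly bounded Borel equivalence relation `E` such
that every `ρ_s`-ball of radius `r` meets at most `2` classes of `E`. -/
theorem stmt14 {S : Type*} [Finite S] [MeasurableSpace S]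
    [DiscreteMeasurableSpace S] (r : ℝ) (hr : 0 < r) :
    ∃ E : (ℕ → S) → (ℕ → S) → Prop,
      Equivalence E ∧ MeasurableSet {p : (ℕ → S) × (ℕ → S) | E p.1 p.2} ∧
      (∃ K : ℝ, ∀ x y, E x y → shiftDistLe x y K) ∧
      ∀ x : ℕ → S, ∃ a b : ℕ → S, ∀ y : ℕ → S,
        shiftDistLe x y r → E y a ∨ E y b :=
  stmt14_general r
end

section
/- Let G be a hyperbolic group with finite symmetric generating set S, let η ∈ ∂G, let Γ ∈ CGR(g,η) be the unique geodesic ray from g ∈ G to η whose type is lexicographically minimal among types of rays in CGR(g,η). Then for all n_0 < n_1, the segment (Γ(n_0), …, Γ(n_1)) is the unique geodesic path from Γ(n_0) to Γ(n_1) whose type is lexicographically minimal among types of geodesic paths from Γ(n_0) to Γ(n_1). -/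
/-!
Replacing the stretch of a geodesic ray between times `n₀` and `n₁` by any geodesic with the same
endpoints gives again a geodesic ray, with the same starting point and at bounded distance from the
old one, so it lies in the same `CGR(g, η)`. Its type differs from that of `Δ` only on the window
`[n₀, n₁)`, where it is the type of the inserted path; lexicographic minimality of `typ Δ` therefore
forces the window of `typ Δ` to be lexicographically minimal. A path is determined by its
starting point and its type, which gives uniqueness.
-/

namespace BA

open SimpleGraph

section Graph

variable {V : Type*} {G : SimpleGraph V}

theorem exists_walk_length_eq_sub_of_adj {y : ℕ → V} {m n : ℕ}
    (hy : ∀ i, m ≤ i → i < n → G.Adj (y i) (y (i + 1))) (hmn : m ≤ n) :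
    ∃ w : G.Walk (y m) (y n), w.length = n - m := by
  induction n, hmn using Nat.le_induction with
  | base => exact ⟨Walk.nil, by simp⟩
  | succ n hmn ih =>
    obtain ⟨w, hw⟩ := ih fun i hmi hin => hy i hmi (by omega)
    exact ⟨w.concat (hy n hmn n.lt_succ_self), by simp [hw]; omega⟩

theorem dist_le_sub_of_adj {y : ℕ → V} (hy : ∀ n, G.Adj (y n) (y (n + 1))) {m n : ℕ}
    (hmn : m ≤ n) : G.dist (y m) (y n) ≤ n - m := by
  obtain ⟨w, hw⟩ := exists_walk_length_eq_sub_of_adj (fun i _ _ => hy i) hmn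
  exact hw ▸ dist_le w

theorem reachable_of_adj {y : ℕ → V} (hy : ∀ n, G.Adj (y n) (y (n + 1))) (m n : ℕ) :
    G.Reachable (y m) (y n) := by
  wlog hmn : m ≤ n generalizing m n
  · exact (this n m (by omega)).symm
  exact (exists_walk_length_eq_sub_of_adj (fun i _ _ => hy i) hmn).elim fun w _ => ⟨w⟩

/-- A shortcut anywhere along the path would shorten it from `y 0` to some far `y N`. -/
theorem geoRay_of_adj_of_dist_eq {y : ℕ → V} (hy : ∀ n, G.Adj (y n) (y (n + 1))) (N₀ : ℕ)
    (hfar : ∀ N, N₀ ≤ N → G.dist (y 0) (y N) = N) : GeoRay G y := by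
  refine ⟨hy, fun m n => ?_⟩
  wlog hmn : m ≤ n generalizing m n
  · rw [dist_comm, Nat.dist_comm, this n m (by omega)]
  rw [Nat.dist_eq_sub_of_le hmn]
  obtain ⟨N, hnN, hN⟩ : ∃ N, n ≤ N ∧ G.dist (y 0) (y N) = N :=
    ⟨max n N₀, le_max_left _ _, hfar _ (le_max_right _ _)⟩
  have h0m := dist_le_sub_of_adj hy (Nat.zero_le m)
  have hnN' := dist_le_sub_of_adj hy hnN
  have h1 := (reachable_of_adj hy 0 m).dist_triangle_left (y N)
  have h2 := (reachable_of_adj hy m n).dist_triangle_left (y N)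
  have := dist_le_sub_of_adj hy hmn
  omega

theorem asymp_of_walk_length_le {x y : ℕ → V} (K : ℕ)
    (h : ∀ n, ∃ w : G.Walk (x n) (y n), w.length ≤ K) : Asymp G x y :=
  ⟨K, fun n => ⟨n, h n⟩, fun n => ⟨n, h n⟩⟩

end Graph

section Splice

variable {V : Type*} (x p : ℕ → V) (a k : ℕ)

/-- `x` with `p` inserted on the window `[a, a + k]`. The condition is on the open window, so that
`x` is kept at the endpoints; the lemmas below assume that `p` agrees with `x` there. -/
def splice : ℕ → V := fun n => if a < n ∧ n < a + k then p (n - a) else x n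

variable {x p a k}

theorem splice_of_le {n : ℕ} (hn : n ≤ a) : splice x p a k n = x n :=
  if_neg fun h => by omega

theorem splice_of_add_le {n : ℕ} (hn : a + k ≤ n) : splice x p a k n = x n :=
  if_neg fun h => by omega

theorem splice_add (h0 : p 0 = x a) (hk : p k = x (a + k)) {i : ℕ} (hi : i ≤ k) :
    splice x p a k (a + i) = p i := by
  unfold splice
  split_ifs with h
  · rw [Nat.add_sub_cancel_left]
  · rcases Nat.eq_zero_or_pos i with rfl | hi0
    · simpa using h0.symm
    · obtain rfl : i = k := by omega
      exact hk.symm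

variable {G : SimpleGraph V}

theorem adj_splice (hx : ∀ n, G.Adj (x n) (x (n + 1))) (hp : ∀ i < k, G.Adj (p i) (p (i + 1)))
    (h0 : p 0 = x a) (hk : p k = x (a + k)) (n : ℕ) :
    G.Adj (splice x p a k n) (splice x p a k (n + 1)) := by
  by_cases hna : n < a
  · rw [splice_of_le (by omega), splice_of_le (by omega)]
    exact hx n
  by_cases hnk : a + k ≤ n
  · rw [splice_of_add_le hnk, splice_of_add_le (by omega)]
    exact hx n
  obtain ⟨i, rfl⟩ := Nat.exists_eq_add_of_le (not_lt.mp hna)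
  rw [splice_add h0 hk (by omega), add_assoc, splice_add h0 hk (by omega)]
  exact hp i (by omega)

theorem GeoRay.splice (hx : GeoRay G x) (hp : ∀ i < k, G.Adj (p i) (p (i + 1)))
    (h0 : p 0 = x a) (hk : p k = x (a + k)) : GeoRay G (splice x p a k) := by
  refine geoRay_of_adj_of_dist_eq (adj_splice hx.1 hp h0 hk) (a + k) fun N hN => ?_
  rw [splice_of_le (Nat.zero_le a), splice_of_add_le hN, hx.2, Nat.dist_zero_left]

/-- Inside the window, `p i` is joined to `x (a + i)` through `p 0 = x a` in `2 i` steps. -/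
theorem asymp_splice (hx : ∀ n, G.Adj (x n) (x (n + 1))) (hp : ∀ i < k, G.Adj (p i) (p (i + 1)))
    (h0 : p 0 = x a) (hk : p k = x (a + k)) : Asymp G (splice x p a k) x := by
  refine asymp_of_walk_length_le (2 * k) fun n => ?_
  by_cases hn : a ≤ n ∧ n ≤ a + k
  · obtain ⟨i, rfl⟩ := Nat.exists_eq_add_of_le hn.1
    obtain ⟨wp, hwp⟩ := exists_walk_length_eq_sub_of_adj (m := 0) (n := i)
      (fun j _ hj => hp j (by omega)) (Nat.zero_le i)
    obtain ⟨wx, hwx⟩ := exists_walk_length_eq_sub_of_adj (m := a) (n := a + i)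
      (fun j _ _ => hx j) (Nat.le_add_right a i)
    refine ⟨(wp.reverse.append (wx.copy h0.symm rfl)).copy (splice_add h0 hk (by omega)).symm rfl,
      ?_⟩
    simp only [Walk.length_copy, Walk.length_append, Walk.length_reverse, hwp, hwx]
    omega
  · rw [show splice x p a k n = x n by unfold splice; exact if_neg (by omega)]
    exact ⟨Walk.nil, Nat.zero_le _⟩

end Splice

section PathType

variable {V : Type*} [Group V]

theorem typ_splice_of_lt {x p : ℕ → V} {a k n : ℕ} (hn : n < a) :
    typ (splice x p a k) n = typ x n := by
  simp only [typ, splice_of_le hn.le, splice_of_le (Nat.succ_le_of_lt hn)]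

theorem typ_splice_of_add_le {x p : ℕ → V} {a k n : ℕ} (hn : a + k ≤ n) :
    typ (splice x p a k) n = typ x n := by
  simp only [typ, splice_of_add_le hn, splice_of_add_le (hn.trans n.le_succ)]

theorem typ_splice_add {x p : ℕ → V} {a k i : ℕ} (h0 : p 0 = x a) (hk : p k = x (a + k))
    (hi : i < k) : typ (splice x p a k) (a + i) = typ p i := by
  simp only [typ, splice_add h0 hk hi.le, add_assoc, splice_add h0 hk (Nat.succ_le_of_lt hi)]

theorem eq_of_typ_eq {x y : ℕ → V} {k : ℕ} (h0 : x 0 = y 0) (h : ∀ i < k, typ x i = typ y i) :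
    ∀ i ≤ k, x i = y i := by
  intro i hi
  induction i with
  | zero => exact h0
  | succ i ih =>
    have hi' : i < k := hi
    rw [← mul_inv_cancel_left (x i) (x (i + 1)), ← mul_inv_cancel_left (y i) (y (i + 1))]
    exact congrArg₂ (· * ·) (ih hi'.le) (h i hi')

end PathType

theorem lexLeUpTo_of_lexLe {α : Type*} [LinearOrder α] {u v w : ℕ → α} {a k : ℕ}
    (huv : lexLe u v) (hout : ∀ n, n < a ∨ a + k ≤ n → u n = v n)
    (hw : ∀ i < k, v (a + i) = w i) : lexLeUpTo k (fun i => u (a + i)) w := by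
  rcases huv with rfl | ⟨n, hpre, hlt⟩
  · exact Or.inl hw
  have hn : a ≤ n ∧ n < a + k := by
    by_contra hn
    exact hlt.ne (hout n (by omega))
  obtain ⟨i, rfl⟩ := Nat.exists_eq_add_of_le hn.1
  refine Or.inr ⟨i, by omega, fun j hj => ?_, ?_⟩
  · rw [← hw j (by omega)]
    exact hpre (a + j) (by omega)
  · rwa [← hw i (by omega)]

end BA

open BA in
theorem stmt17_general {G : Type*} [Group G] [LinearOrder G] (S : Finset G)
    (g : G) (Δ : ℕ → G) (hΔ : GeoRay (cayley (S : Set G)) Δ) (h0 : Δ 0 = g)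
    (hmin : ∀ Δ' : ℕ → G, GeoRay (cayley (S : Set G)) Δ' → Δ' 0 = g →
      Asymp (cayley (S : Set G)) Δ' Δ → lexLe (typ Δ) (typ Δ'))
    (n0 n1 : ℕ) (p : ℕ → G)
    (hp : GeoSeg (cayley (S : Set G)) p (n1 - n0))
    (hp0 : p 0 = Δ n0) (hp1 : p (n1 - n0) = Δ n1) :
    lexLeUpTo (n1 - n0) (typ fun i => Δ (n0 + i)) (typ p) ∧
    ((∀ i < n1 - n0, typ p i = typ (fun i => Δ (n0 + i)) i) →
      ∀ i ≤ n1 - n0, p i = Δ (n0 + i)) := by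
  set k := n1 - n0
  have hpk : p k = Δ (n0 + k) := by
    rcases le_total n0 n1 with h | h
    · rw [Nat.add_sub_cancel' h]
      exact hp1
    · rw [show k = 0 from Nat.sub_eq_zero_of_le h, add_zero]
      exact hp0
  refine ⟨?_, eq_of_typ_eq (by simpa using hp0)⟩
  have hlex := hmin _ (hΔ.splice hp.1 hp0 hpk) (by rw [splice_of_le (Nat.zero_le n0), h0])
    (asymp_splice hΔ.1 hp.1 hp0 hpk)
  refine lexLeUpTo_of_lexLe hlex (fun n hn => ?_) fun i hi => typ_splice_add hp0 hpk hi
  rcases hn with hn | hn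
  · exact (typ_splice_of_lt hn).symm
  · exact (typ_splice_of_add_le hn).symm

open BA in
/-- If `Δ` is the ray in `CGR(g, η)` of lexicographically minimal
type, then for `n0 < n1` the segment `(Δ n0, …, Δ n1)` is the unique geodesic
path from `Δ n0` to `Δ n1` of lexicographically minimal type. -/
theorem stmt17 {G : Type*} [Group G] [LinearOrder G] (S : Finset G)
    (hsym : ∀ s ∈ S, s⁻¹ ∈ S) (hgen : Subgroup.closure (S : Set G) = ⊤)
    (δ : ℝ) (hδ : 0 < δ) (hhyp : DeltaThin (cayley (S : Set G)) δ)
    (g : G) (Δ : ℕ → G) (hΔ : GeoRay (cayley (S : Set G)) Δ) (h0 : Δ 0 = g)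
    (hmin : ∀ Δ' : ℕ → G, GeoRay (cayley (S : Set G)) Δ' → Δ' 0 = g →
      Asymp (cayley (S : Set G)) Δ' Δ → lexLe (typ Δ) (typ Δ'))
    (n0 n1 : ℕ) (h01 : n0 < n1) (p : ℕ → G)
    (hp : GeoSeg (cayley (S : Set G)) p (n1 - n0))
    (hp0 : p 0 = Δ n0) (hp1 : p (n1 - n0) = Δ n1) :
    lexLeUpTo (n1 - n0) (typ fun i => Δ (n0 + i)) (typ p) ∧
    ((∀ i < n1 - n0, typ p i = typ (fun i => Δ (n0 + i)) i) →
      ∀ i ≤ n1 - n0, p i = Δ (n0 + i)) :=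
  stmt17_general S g Δ hΔ h0 hmin n0 n1 p hp hp0 hp1
end
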